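/- arXiv:1612.05694 — 14 statements merged into one kernel-verified Lean document; each statement's English description precedes it below -/
import Mathlib

section
/- For posets A and B, the map sending an antitone map f : A → B to the relation T_f = {(x,y) ∈ A × B : y ≤ f(x)} is an order isomorphism from the pointwise-ordered set of antitone maps f : A → B such that each preimage f⁻¹[↑y] of a principal filter is a principal ideal, onto the set of down-sets T ⊆ A × B (ordered by inclusion) such that for each x ∈ A the slice xT = {y : (x,y) ∈ T} is a principal ideal and for each y ∈ B the slice Ty = {x : (x,y) ∈ T} is a principal ideal; the inverse sends T to the map x ↦ max(xT). -/
/-- A down-set of `A × B` all of whose slices (in either coordinate) are principal ideals. -/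
def IsLrTensor {A B : Type*} [Preorder A] [Preorder B] (T : Set (A × B)) : Prop :=
  IsLowerSet T ∧ (∀ x : A, ∃ b : B, {y | (x, y) ∈ T} = Set.Iic b) ∧
    (∀ y : B, ∃ a : A, {x | (x, y) ∈ T} = Set.Iic a)

section aux

variable {A B : Type*} [PartialOrder A] [PartialOrder B]

/-- The function associated to a tensor: `x ↦ max (xT)`. -/
noncomputable def lrFun (T : {T : Set (A × B) // IsLrTensor T}) (x : A) : B :=
  Classical.choose (T.2.2.1 x)

lemma lrFun_spec (T : {T : Set (A × B) // IsLrTensor T}) (x : A) :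
    {y | (x, y) ∈ (T : Set (A × B))} = Set.Iic (lrFun T x) :=
  Classical.choose_spec (T.2.2.1 x)

lemma mem_iff (T : {T : Set (A × B) // IsLrTensor T}) (x : A) (y : B) :
    (x, y) ∈ (T : Set (A × B)) ↔ y ≤ lrFun T x := by
  have := lrFun_spec T x
  constructor
  · intro h; have : y ∈ Set.Iic (lrFun T x) := this ▸ h; exact this
  · intro h; have : y ∈ {y | (x, y) ∈ (T : Set (A × B))} := by rw [this]; exact h
    exact this

lemma lrFun_antitone (T : {T : Set (A × B) // IsLrTensor T}) : Antitone (lrFun T) := by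
  intro x x' h
  rw [← mem_iff T x]
  exact T.2.1 (Prod.mk_le_mk.mpr ⟨h, le_rfl⟩) ((mem_iff T x' _).mpr le_rfl)

lemma lrFun_pre (T : {T : Set (A × B) // IsLrTensor T}) (y : B) :
    ∃ a : A, lrFun T ⁻¹' Set.Ici y = Set.Iic a := by
  obtain ⟨a, ha⟩ := T.2.2.2 y
  refine ⟨a, ?_⟩
  ext x
  simp only [Set.mem_preimage, Set.mem_Ici, ← mem_iff T x y]
  exact Set.ext_iff.mp ha x

end aux

/-- The map `f ↦ T_f = {(x,y) : y ≤ f x}` is an order isomorphism from the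
pointwise-ordered set of antitone maps whose preimages of principal filters are principal
ideals, onto the inclusion-ordered set of down-sets of `A × B` all of whose slices are
principal ideals; the inverse sends `T` to `x ↦ max (xT)`. -/
theorem stmt_0 {A B : Type*} [PartialOrder A] [PartialOrder B] :
    ∃ e : {f : A → B // Antitone f ∧ ∀ y : B, ∃ a : A, f ⁻¹' Set.Ici y = Set.Iic a} ≃o
          {T : Set (A × B) // IsLrTensor T},
      (∀ f, (e f : Set (A × B)) = {p : A × B | p.2 ≤ (f : A → B) p.1}) ∧
      (∀ T : {T : Set (A × B) // IsLrTensor T}, ∀ x : A,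
        {y | (x, y) ∈ (T : Set (A × B))} = Set.Iic ((e.symm T : A → B) x)) := by
  have key : ∀ f : {f : A → B // Antitone f ∧ ∀ y : B, ∃ a : A, f ⁻¹' Set.Ici y = Set.Iic a},
      IsLrTensor {p : A × B | p.2 ≤ (f : A → B) p.1} := by
    intro ⟨f, hf, hpre⟩
    refine ⟨?_, fun x => ⟨f x, rfl⟩, fun y => ?_⟩
    · rintro ⟨x, b⟩ ⟨x', b'⟩ ⟨h1, h2⟩ hm
      exact le_trans h2 (le_trans hm (hf h1))
    · obtain ⟨a, ha⟩ := hpre y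
      exact ⟨a, by ext x; exact Set.ext_iff.mp ha x⟩
  refine ⟨{ toFun := fun f => ⟨{p : A × B | p.2 ≤ (f : A → B) p.1}, key f⟩
            invFun := fun T => ⟨lrFun T, lrFun_antitone T, lrFun_pre T⟩
            left_inv := ?_
            right_inv := ?_
            map_rel_iff' := ?_ }, fun f => rfl, fun T x => ?_⟩
  · intro f
    ext x
    have h := lrFun_spec ⟨{p : A × B | p.2 ≤ (f : A → B) p.1}, key f⟩ x
    have : Set.Iic ((f : A → B) x) = Set.Iic (lrFun ⟨{p : A × B | p.2 ≤ (f : A → B) p.1}, key f⟩ x) := by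
      rw [← h]; rfl
    exact (Set.Iic_injective this).symm ▸ rfl
  · intro T
    ext ⟨x, y⟩
    exact (mem_iff T x y).symm
  · intro f g
    simp only [Equiv.coe_fn_mk, Subtype.mk_le_mk, Set.le_eq_subset, Set.setOf_subset_setOf]
    constructor
    · intro h x
      exact h (a := (x, (f : A → B) x)) le_rfl
    · intro h p hp
      exact le_trans hp (h p.1)
  · exact lrFun_spec T x
end

section
/- Let A and B be complete lattices. The mutually inverse maps f ↦ T_f = {(x,y) : y ≤ f(x)} and T ↦ (x ↦ sup(xT)) restrict to an order isomorphism between the complete lattice Gal(A,B) of all maps f : A → B satisfying f(⋁X) = ⋀ f[X] for every subset X ⊆ A, and the complete lattice of all tensors, i.e. down-sets T ⊆ A × B such that X × Y ⊆ T implies (⋁X, ⋁Y) ∈ T for all X ⊆ A, Y ⊆ B, ordered by inclusion. -/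
/-- A tensor between complete lattices: a down-set `T ⊆ A × B` such that
`X × Y ⊆ T` implies `(⋁X, ⋁Y) ∈ T`. -/
def IsTensorCL {A B : Type*} [CompleteLattice A] [CompleteLattice B] (T : Set (A × B)) : Prop :=
  IsLowerSet T ∧ ∀ (X : Set A) (Y : Set B), X ×ˢ Y ⊆ T → (sSup X, sSup Y) ∈ T

section Aux

variable {A B : Type*} [CompleteLattice A] [CompleteLattice B]

lemma gal_antitone {f : A → B} (hf : ∀ X : Set A, f (sSup X) = sInf (f '' X)) :
    Antitone f := by
  intro x x' hxx'
  have h : f (sSup {x, x'}) = sInf (f '' {x, x'}) := hf {x, x'}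
  have hs : sSup ({x, x'} : Set A) = x' := by
    rw [sSup_pair, sup_eq_right.mpr hxx']
  rw [hs] at h
  rw [h]
  exact sInf_le ⟨x, by simp, rfl⟩

lemma tensor_isTensor {f : A → B} (hf : ∀ X : Set A, f (sSup X) = sInf (f '' X)) :
    IsTensorCL {p : A × B | p.2 ≤ f p.1} := by
  constructor
  · intro p q hpq hp
    exact le_trans hpq.2 (le_trans hp (gal_antitone hf hpq.1))
  · intro X Y hXY
    have : sSup Y ≤ sInf (f '' X) := by
      apply le_sInf
      rintro b ⟨x, hx, rfl⟩
      exact sSup_le fun y hy => hXY (Set.mk_mem_prod hx hy)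
    simpa [hf X] using this

lemma mem_tensor_iff {T : Set (A × B)} (hT : IsTensorCL T) (x : A) (y : B) :
    (x, y) ∈ T ↔ y ≤ sSup {y | (x, y) ∈ T} := by
  constructor
  · intro h; exact le_sSup h
  · intro h
    have hmem : (x, sSup {y | (x, y) ∈ T}) ∈ T := by
      have := hT.2 {x} {y | (x, y) ∈ T} (by rintro ⟨a, b⟩ ⟨ha, hb⟩; simp_all)
      simpa using this
    exact hT.1 ⟨le_refl x, h⟩ hmem

lemma inv_gal {T : Set (A × B)} (hT : IsTensorCL T) (X : Set A) :
    sSup {y | (sSup X, y) ∈ T} = sInf ((fun x => sSup {y | (x, y) ∈ T}) '' X) := by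
  apply le_antisymm
  · apply le_sInf
    rintro b ⟨x, hx, rfl⟩
    apply sSup_le_sSup
    intro y hy
    exact hT.1 ⟨le_sSup hx, le_refl y⟩ hy
  · set b := sInf ((fun x => sSup {y | (x, y) ∈ T}) '' X) with hb
    have hmem : (sSup X, sSup ({b} : Set B)) ∈ T := by
      apply hT.2
      rintro ⟨a, c⟩ ⟨ha, hc⟩
      simp only [Set.mem_singleton_iff] at hc
      subst hc
      rw [mem_tensor_iff hT]
      exact sInf_le ⟨a, ha, rfl⟩
    rw [sSup_singleton] at hmem
    exact le_sSup hmem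

end Aux

/-- For complete lattices `A`, `B`, the mutually inverse maps
`f ↦ T_f = {(x,y) : y ≤ f x}` and `T ↦ (x ↦ ⋁ xT)` form an order isomorphism between the
complete lattice `Gal(A,B)` of maps with `f(⋁X) = ⋀ f[X]` for all `X ⊆ A` (pointwise order)
and the complete lattice of tensors ordered by inclusion. -/
theorem stmt_1 {A B : Type*} [CompleteLattice A] [CompleteLattice B] :
    ∃ e : {f : A → B // ∀ X : Set A, f (sSup X) = sInf (f '' X)} ≃o
          {T : Set (A × B) // IsTensorCL T},
      (∀ f, (e f : Set (A × B)) = {p : A × B | p.2 ≤ (f : A → B) p.1}) ∧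
      (∀ T : {T : Set (A × B) // IsTensorCL T},
        (e.symm T : A → B) = fun x => sSup {y | (x, y) ∈ (T : Set (A × B))}) := by
  refine ⟨{ toFun := fun f => ⟨{p : A × B | p.2 ≤ (f : A → B) p.1}, tensor_isTensor f.2⟩
            invFun := fun T => ⟨fun x => sSup {y | (x, y) ∈ (T : Set (A × B))},
              fun X => inv_gal T.2 X⟩
            left_inv := ?_
            right_inv := ?_
            map_rel_iff' := ?_ }, fun f => rfl, fun T => rfl⟩
  · rintro ⟨f, hf⟩
    ext x
    simp only
    exact le_antisymm (sSup_le fun y hy => hy) (le_sSup le_rfl)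
  · rintro ⟨T, hT⟩
    ext p
    simp only [Set.mem_setOf_eq]
    exact (mem_tensor_iff hT p.1 p.2).symm
  · rintro ⟨f, hf⟩ ⟨g, hg⟩
    constructor
    · intro h x
      have : (x, f x) ∈ {p : A × B | p.2 ≤ f p.1} := le_refl _
      exact h this
    · intro h
      rintro ⟨x, y⟩ hp
      exact le_trans hp (h x)
end

section
/- Let 𝕀 = [0,1] be the real unit interval with its usual order, viewed as a complete lattice, and let f, g : 𝕀 → 𝕀 be antitone maps. Define r = sup{x : f(x) > 0} and s = sup{g(y) : y > 0}. Then the composite g ⊙ f, defined by (g ⊙ f)(a) = sup{c : (a,c) ∈ E}, where E is the smallest tensor (down-set closed under componentwise suprema of rectangles) containing T = {(x,z) : ∃ y > 0, y ≤ f(x) and z ≤ g(y)}, is the step function with (g⊙f)(0) = 1, (g⊙f)(a) = s for 0 < a ≤ r, and (g⊙f)(a) = 0 for a > r. -/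
open unitInterval

instance : Fact ((0:ℝ) ≤ 1) := ⟨zero_le_one⟩

/-- A tensor in `𝕀 × 𝕀`: a down-set closed under componentwise suprema of rectangles. -/
def IsTensorI (T : Set (unitInterval × unitInterval)) : Prop :=
  IsLowerSet T ∧ ∀ (X Y : Set unitInterval), X ×ˢ Y ⊆ T → (sSup X, sSup Y) ∈ T

/-- For antitone `f, g : 𝕀 → 𝕀`, the composite `g ⊙ f`, defined via the smallest
tensor `E` containing `T = {(x,z) : ∃ y > 0, y ≤ f x ∧ z ≤ g y}` by
`(g ⊙ f)(a) = ⋁{c : (a,c) ∈ E}`, is the step function with value `1` at `0`, value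
`s = ⋁{g y : y > 0}` on `(0, r]` where `r = ⋁{x : f x > 0}`, and value `0` above `r`. -/
theorem stmt_2 (f g : unitInterval → unitInterval) (hf : Antitone f) (hg : Antitone g) :
    let T : Set (unitInterval × unitInterval) :=
      {p | ∃ y : unitInterval, 0 < y ∧ y ≤ f p.1 ∧ p.2 ≤ g y}
    let E : Set (unitInterval × unitInterval) := ⋂₀ {T' | IsTensorI T' ∧ T ⊆ T'}
    let gf : unitInterval → unitInterval := fun a => sSup {c | (a, c) ∈ E}
    let r : unitInterval := sSup {x | 0 < f x}
    let s : unitInterval := sSup (g '' {y | 0 < y})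
    gf 0 = 1 ∧ (∀ a, 0 < a → a ≤ r → gf a = s) ∧ (∀ a, r < a → gf a = 0) := by
  intro T E gf r s
  have hbot : (⊥ : unitInterval) = 0 := rfl
  -- the candidate tensor D
  set D : Set (unitInterval × unitInterval) :=
    {p | p.1 = 0 ∨ p.2 = 0 ∨ (p.1 ≤ r ∧ p.2 ≤ s)} with hDdef
  have hDtensor : IsTensorI D := by
    constructor
    · rintro ⟨a, c⟩ ⟨a', c'⟩ ⟨h1, h2⟩ hp
      rcases hp with h | h | ⟨har, hcs⟩
      · exact Or.inl (le_antisymm (h ▸ h1) (a'.2.1))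
      · exact Or.inr (Or.inl (le_antisymm (h ▸ h2) (c'.2.1)))
      · exact Or.inr (Or.inr ⟨le_trans h1 har, le_trans h2 hcs⟩)
    · intro X Y hXY
      by_cases hX : sSup X = 0
      · exact Or.inl hX
      by_cases hY : sSup Y = 0
      · exact Or.inr (Or.inl hY)
      -- there are positive elements in X and Y
      have hX' : ∃ x ∈ X, 0 < x := by
        by_contra h
        push_neg at h
        exact hX (le_antisymm (sSup_le fun x hx => h x hx) (sSup X).2.1)
      have hY' : ∃ y ∈ Y, 0 < y := by
        by_contra h
        push_neg at h
        exact hY (le_antisymm (sSup_le fun y hy => h y hy) (sSup Y).2.1)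
      obtain ⟨x0, hx0, hx0pos⟩ := hX'
      obtain ⟨y0, hy0, hy0pos⟩ := hY'
      refine Or.inr (Or.inr ⟨sSup_le fun x hx => ?_, sSup_le fun y hy => ?_⟩)
      · rcases hXY (Set.mk_mem_prod hx hy0) with h | h | ⟨h, _⟩
        · exact le_trans (le_of_eq h) (sSup {x | 0 < f x}).2.1
        · exact absurd h hy0pos.ne'
        · exact h
      · rcases hXY (Set.mk_mem_prod hx0 hy) with h | h | ⟨_, h⟩
        · exact absurd h hx0pos.ne'
        · exact le_trans (le_of_eq h) (sSup (g '' {y | 0 < y})).2.1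
        · exact h
  have hTD : T ⊆ D := by
    rintro ⟨x, z⟩ ⟨y, hy, hyf, hzg⟩
    refine Or.inr (Or.inr ⟨le_sSup ?_, le_trans hzg (le_sSup ⟨y, hy, rfl⟩)⟩)
    exact lt_of_lt_of_le hy hyf
  have hED : E ⊆ D := Set.sInter_subset_of_mem ⟨hDtensor, hTD⟩
  -- key memberships in E
  have h01 : ((0 : unitInterval), (1 : unitInterval)) ∈ E := by
    intro T' hT'
    have := hT'.1.2 ∅ {1} (by simp)
    simpa [sSup_empty, hbot, sSup_singleton] using this
  have ha0 : ∀ a : unitInterval, (a, (0 : unitInterval)) ∈ E := by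
    intro a T' hT'
    have := hT'.1.2 {a} ∅ (by simp)
    simpa [sSup_empty, hbot, sSup_singleton] using this
  have hrs : ((r : unitInterval), (s : unitInterval)) ∈ E := by
    intro T' hT'
    have hsub : {x | 0 < f x} ×ˢ (g '' {y | 0 < y}) ⊆ T' := by
      rintro ⟨x, c⟩ ⟨hx, y, hy, rfl⟩
      refine hT'.2 ⟨y ⊓ f x, lt_inf_iff.mpr ⟨hy, hx⟩, inf_le_right, hg inf_le_left⟩
    exact hT'.1.2 _ _ hsub
  have hElower : IsLowerSet E := by
    intro p q hle hp T' hT'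
    exact hT'.1.1 hle (hp T' hT')
  refine ⟨?_, ?_, ?_⟩
  · -- gf 0 = 1
    refine le_antisymm (le_one _) (le_sSup ?_)
    exact h01
  · -- 0 < a ≤ r → gf a = s
    intro a ha har
    refine le_antisymm (sSup_le fun c hc => ?_) (le_sSup ?_)
    · rcases hED hc with h | h | ⟨_, h⟩
      · exact absurd h ha.ne'
      · exact le_trans (le_of_eq h) s.2.1
      · exact h
    · exact hElower (Prod.mk_le_mk.mpr ⟨har, le_rfl⟩) hrs
  · -- r < a → gf a = 0
    intro a hra
    refine le_antisymm (sSup_le fun c hc => ?_) nonneg'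
    rcases hED hc with h | h | ⟨h, _⟩
    · exact absurd ((show a = 0 from h) ▸ hra) (not_lt.mpr nonneg')
    · exact h.le
    · exact absurd hra (not_lt.mpr h)
end

section
/- Let I, J, K be complete lattices with preclosure operations i, j, k respectively (extensive isotone self-maps), with induced closure operations ī, j̄, k̄ (the least closure operations above them). Suppose m : I × J → K, written (x,y) ↦ x·y, satisfies (⋁X)·(⋁Y) = ⋁{x·y : x ∈ X, y ∈ Y} for all X ⊆ I, Y ⊆ J. If i(x)·y ∨ x·j(y) ≤ k̄(x·y) for all x ∈ I, y ∈ J, then k̄(ī(x)·j̄(y)) = k̄(x·y) for all x ∈ I, y ∈ J. -/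
/-- The least closure operation above a preclosure operation `f`:
`f̄(x) = ⋀{y : f y = y, x ≤ y}` (infimum of the fixpoints above `x`). -/
def leastClosure {L : Type*} [CompleteLattice L] (f : L → L) (x : L) : L :=
  sInf {y | f y = y ∧ x ≤ y}

namespace LCAux

variable {L : Type*} [CompleteLattice L] {f : L → L}

lemma le_lc (x : L) : x ≤ leastClosure f x :=
  le_sInf fun _ hy => hy.2

lemma lc_le {x y : L} (hy : f y = y) (hxy : x ≤ y) : leastClosure f x ≤ y :=
  sInf_le ⟨hy, hxy⟩

lemma lc_mono {x y : L} (hxy : x ≤ y) : leastClosure f x ≤ leastClosure f y :=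
  sInf_le_sInf fun z hz => ⟨hz.1, hxy.trans hz.2⟩

lemma lc_fix (h₁ : ∀ x, x ≤ f x) (h₂ : Monotone f) (x : L) :
    f (leastClosure f x) = leastClosure f x := by
  refine le_antisymm (le_sInf fun y hy => ?_) (h₁ _)
  calc f (leastClosure f x) ≤ f y := h₂ (sInf_le hy)
    _ = y := hy.1

lemma lc_idem (h₁ : ∀ x, x ≤ f x) (h₂ : Monotone f) (x : L) :
    leastClosure f (leastClosure f x) = leastClosure f x :=
  le_antisymm (lc_le (lc_fix h₁ h₂ x) le_rfl) (le_lc _)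

lemma mono_of_sup {M : Type*} [CompleteLattice M] (n : L → M)
    (hn : ∀ X : Set L, n (sSup X) = sSup (n '' X)) : Monotone n := by
  intro a b hab
  have := hn {a, b}
  simp only [sSup_insert, csSup_singleton, Set.image_insert_eq, Set.image_singleton,
    sup_eq_right.mpr hab] at this
  rw [this]
  exact le_sup_left

/-- Key step: if `n` is completely sup-preserving and `n ∘ f ≤ ḡ ∘ n` pointwise,
then `n (f̄ x) ≤ ḡ (n x)`. -/
lemma step {M : Type*} [CompleteLattice M] {g : M → M}
    (hf₁ : ∀ x, x ≤ f x) (hg₁ : ∀ x, x ≤ g x) (hg₂ : Monotone g)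
    (n : L → M) (hn : ∀ X : Set L, n (sSup X) = sSup (n '' X))
    (hng : ∀ x, n (f x) ≤ leastClosure g (n x)) (x : L) :
    n (leastClosure f x) ≤ leastClosure g (n x) := by
  set A : Set L := {x' | n x' ≤ leastClosure g (n x)} with hA
  have haSup : n (sSup A) ≤ leastClosure g (n x) := by
    rw [hn]
    exact sSup_le fun z ⟨x', hx', hz⟩ => hz ▸ hx'
  have hxA : x ∈ A := le_lc (n x)
  have hfix : f (sSup A) = sSup A := by
    refine le_antisymm (le_sSup ?_) (hf₁ _)
    show n (f (sSup A)) ≤ leastClosure g (n x)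
    calc n (f (sSup A)) ≤ leastClosure g (n (sSup A)) := hng _
      _ ≤ leastClosure g (leastClosure g (n x)) := lc_mono haSup
      _ = leastClosure g (n x) := lc_idem hg₁ hg₂ _
  calc n (leastClosure f x) ≤ n (sSup A) :=
        mono_of_sup n hn (lc_le hfix (le_sSup hxA))
    _ ≤ leastClosure g (n x) := haSup

end LCAux

/-- Let `i, j, k` be preclosure operations (extensive, isotone) on complete
lattices `I, J, K`, with induced closure operations `ī, j̄, k̄`, and let `m : I × J → K`
satisfy `(⋁X)·(⋁Y) = ⋁{x·y : x ∈ X, y ∈ Y}`. If `i(x)·y ⊔ x·j(y) ≤ k̄(x·y)` for all `x, y`,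
then `k̄(ī(x)·j̄(y)) = k̄(x·y)` for all `x, y`. -/
theorem stmt_4 {I J K : Type*} [CompleteLattice I] [CompleteLattice J] [CompleteLattice K]
    (i : I → I) (j : J → J) (k : K → K)
    (hi₁ : ∀ x, x ≤ i x) (hi₂ : Monotone i)
    (hj₁ : ∀ y, y ≤ j y) (hj₂ : Monotone j)
    (hk₁ : ∀ z, z ≤ k z) (hk₂ : Monotone k)
    (m : I → J → K)
    (hdist : ∀ (X : Set I) (Y : Set J), m (sSup X) (sSup Y) = sSup (Set.image2 m X Y))
    (h : ∀ x y, m (i x) y ⊔ m x (j y) ≤ leastClosure k (m x y)) :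
    ∀ x y, leastClosure k (m (leastClosure i x) (leastClosure j y)) = leastClosure k (m x y) := by
  intro x y
  open LCAux in
  have hn₁ : ∀ (y : J) (X : Set I), m (sSup X) y = sSup ((fun x' => m x' y) '' X) := by
    intro y X
    have := hdist X {y}
    simpa [Set.image2_singleton_right] using this
  have hn₂ : ∀ (x : I) (Y : Set J), m x (sSup Y) = sSup ((fun y' => m x y') '' Y) := by
    intro x Y
    have := hdist {x} Y
    simpa [Set.image2_singleton_left] using this
  -- left step: m (ī x) y ≤ k̄ (m x y)
  have step1 : ∀ x y, m (leastClosure i x) y ≤ leastClosure k (m x y) := fun x y =>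
    LCAux.step hi₁ hk₁ hk₂ (fun x' => m x' y) (hn₁ y)
      (fun x' => le_trans le_sup_left (h x' y)) x
  have step2 : ∀ x y, m x (leastClosure j y) ≤ leastClosure k (m x y) := fun x y =>
    LCAux.step hj₁ hk₁ hk₂ (fun y' => m x y') (hn₂ x)
      (fun y' => le_trans le_sup_right (h x y')) y
  refine le_antisymm ?_ ?_
  · have : m (leastClosure i x) (leastClosure j y) ≤ leastClosure k (m x y) :=
      calc m (leastClosure i x) (leastClosure j y)
          ≤ leastClosure k (m (leastClosure i x) y) := step2 _ _
        _ ≤ leastClosure k (leastClosure k (m x y)) := LCAux.lc_mono (step1 _ _)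
        _ = leastClosure k (m x y) := LCAux.lc_idem hk₁ hk₂ _
    calc leastClosure k (m (leastClosure i x) (leastClosure j y))
        ≤ leastClosure k (leastClosure k (m x y)) := LCAux.lc_mono this
      _ = leastClosure k (m x y) := LCAux.lc_idem hk₁ hk₂ _
  · refine LCAux.lc_mono ?_
    have hmx : m x y ≤ m (leastClosure i x) y := by
      have := LCAux.mono_of_sup (fun x' => m x' y) (hn₁ y)
      exact this (LCAux.le_lc x)
    have hmy : m (leastClosure i x) y ≤ m (leastClosure i x) (leastClosure j y) := by
      have := LCAux.mono_of_sup (fun y' => m (leastClosure i x) y') (hn₂ _)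
      exact this (LCAux.le_lc y)
    exact hmx.trans hmy
end

section
/- For any closure space B (a set with a closure system, i.e. a family of subsets closed under arbitrary intersections), the map η_B sending a point x to the closure of {x} is continuous from B into the complete lattice of closed sets of B (regarded as a closure space whose closed sets are the principal ideals), and for any continuous map f from B into a complete lattice C (with closed sets the principal ideals of C), there is a unique join-preserving map f^∨ from the lattice of closed sets of B to C with f = f^∨ ∘ η_B. -/
/-- A closure system: a family of subsets closed under arbitrary intersections. -/
def IsClosureSystem {α : Type*} (𝒞 : Set (Set α)) : Prop :=
  ∀ 𝒮 ⊆ 𝒞, ⋂₀ 𝒮 ∈ 𝒞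

/-- Closure of a set with respect to a closure system. -/
def clOf {α : Type*} (𝒞 : Set (Set α)) (X : Set α) : Set α :=
  ⋂₀ {F | F ∈ 𝒞 ∧ X ⊆ F}

/-! `η` is continuous because `η⁻¹(↓F) = F` for closed `F`. The unique extension sends a closed set `F` to `⨆ x ∈ F, f x`. It preserves joins of closed
sets because continuity of `f` gives `sSup (f '' cl X) = sSup (f '' X)`, and it is forced because
every closed set is the join of the point closures it contains. -/

section ClosureSystem

variable {α : Type*} {𝒞 : Set (Set α)}

lemma subset_clOf (𝒞 : Set (Set α)) (X : Set α) : X ⊆ clOf 𝒞 X :=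
  fun _ hx _ hF => hF.2 hx

lemma clOf_subset {X F : Set α} (hF : F ∈ 𝒞) (h : X ⊆ F) : clOf 𝒞 X ⊆ F :=
  fun _ hx => hx F ⟨hF, h⟩

lemma IsClosureSystem.clOf_mem (h𝒞 : IsClosureSystem 𝒞) (X : Set α) : clOf 𝒞 X ∈ 𝒞 :=
  h𝒞 _ fun _ hF => hF.1

lemma clOf_eq_self {F : Set α} (hF : F ∈ 𝒞) : clOf 𝒞 F = F :=
  (clOf_subset hF subset_rfl).antisymm (subset_clOf 𝒞 F)

lemma clOf_singleton_subset_iff {F : Set α} (hF : F ∈ 𝒞) {x : α} :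
    clOf 𝒞 {x} ⊆ F ↔ x ∈ F :=
  ⟨fun h => h (subset_clOf 𝒞 {x} rfl), fun hx => clOf_subset hF (Set.singleton_subset_iff.2 hx)⟩

lemma sUnion_image_clOf_singleton {F : Set α} (hF : F ∈ 𝒞) :
    ⋃₀ ((fun x => clOf 𝒞 {x}) '' F) = F := by
  apply subset_antisymm
  · rintro y ⟨_, ⟨x, hx, rfl⟩, hy⟩
    exact (clOf_singleton_subset_iff hF).2 hx hy
  · exact fun x hx => ⟨clOf 𝒞 {x}, ⟨x, hx, rfl⟩, subset_clOf 𝒞 {x} rfl⟩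

/-- The join of closed sets `𝒮` in the lattice of closed sets is `clOf 𝒞 (⋃₀ 𝒮)`. -/
def PreservesClosedSSup {γ : Type*} [CompleteLattice γ] (𝒞 : Set (Set α)) (g : Set α → γ) :
    Prop :=
  ∀ 𝒮 : Set (Set α), (∀ F ∈ 𝒮, F ∈ 𝒞) → g (clOf 𝒞 (⋃₀ 𝒮)) = sSup (g '' 𝒮)

end ClosureSystem

section Extension

variable {β γ : Type*} [CompleteLattice γ] {𝒞 : Set (Set β)} {f : β → γ}

lemma sSup_image_clOf (hf : ∀ c : γ, f ⁻¹' Set.Iic c ∈ 𝒞) (X : Set β) :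
    sSup (f '' clOf 𝒞 X) = sSup (f '' X) := by
  refine le_antisymm (sSup_le ?_) (sSup_le_sSup (Set.image_mono (subset_clOf 𝒞 X)))
  rintro _ ⟨x, hx, rfl⟩
  have hX : X ⊆ f ⁻¹' Set.Iic (sSup (f '' X)) := fun z hz => le_sSup ⟨z, hz, rfl⟩
  exact clOf_subset (hf _) hX hx

lemma sSup_image_sUnion (f : β → γ) (𝒮 : Set (Set β)) :
    sSup (f '' ⋃₀ 𝒮) = sSup ((fun X => sSup (f '' X)) '' 𝒮) := by
  simp only [Set.sUnion_eq_biUnion, Set.image_iUnion₂, sSup_iUnion, sSup_image]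

lemma preservesClosedSSup_sSup_image (hf : ∀ c : γ, f ⁻¹' Set.Iic c ∈ 𝒞) :
    PreservesClosedSSup 𝒞 fun X => sSup (f '' X) := fun 𝒮 _ =>
  (sSup_image_clOf hf _).trans (sSup_image_sUnion f 𝒮)

lemma sSup_image_clOf_singleton (hf : ∀ c : γ, f ⁻¹' Set.Iic c ∈ 𝒞) (x : β) :
    sSup (f '' clOf 𝒞 {x}) = f x := by
  rw [sSup_image_clOf hf, Set.image_singleton, sSup_singleton]

lemma PreservesClosedSSup.eq_sSup_image (h𝒞 : IsClosureSystem 𝒞) {g : Set β → γ}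
    (hg : PreservesClosedSSup 𝒞 g) (hgf : ∀ x, g (clOf 𝒞 {x}) = f x) {F : Set β} (hF : F ∈ 𝒞) :
    g F = sSup (f '' F) := by
  have hpoints := hg ((fun x => clOf 𝒞 {x}) '' F) (by rintro _ ⟨x, -, rfl⟩; exact h𝒞.clOf_mem _)
  rwa [sUnion_image_clOf_singleton hF, clOf_eq_self hF, Set.image_image,
    Set.image_congr fun x _ => hgf x] at hpoints

end Extension

/-- For a closure space `B`, the point-closure map `η : x ↦ cl{x}` is continuous
into the complete lattice of closed sets (closed sets: principal ideals, i.e. preimages of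
`↓F` are closed), and every continuous map `f` from `B` into a complete lattice `C` (closed
sets of `C`: principal ideals) factors uniquely as `f = f^∨ ∘ η` with `f^∨` join-preserving
on the lattice of closed sets. -/
theorem stmt_5 {β : Type*} (𝒞 : Set (Set β)) (h𝒞 : IsClosureSystem 𝒞)
    {γ : Type*} [CompleteLattice γ] (f : β → γ)
    (hf : ∀ c : γ, f ⁻¹' Set.Iic c ∈ 𝒞) :
    (∀ F ∈ 𝒞, {x | clOf 𝒞 {x} ⊆ F} ∈ 𝒞) ∧
    ∃ g : Set β → γ,
      (∀ 𝒮 : Set (Set β), (∀ F ∈ 𝒮, F ∈ 𝒞) → g (clOf 𝒞 (⋃₀ 𝒮)) = sSup (g '' 𝒮)) ∧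
      (∀ x, g (clOf 𝒞 {x}) = f x) ∧
      ∀ g' : Set β → γ,
        (∀ 𝒮 : Set (Set β), (∀ F ∈ 𝒮, F ∈ 𝒞) → g' (clOf 𝒞 (⋃₀ 𝒮)) = sSup (g' '' 𝒮)) →
        (∀ x, g' (clOf 𝒞 {x}) = f x) → ∀ F ∈ 𝒞, g' F = g F := by
  refine ⟨fun F hF => ?_, fun X => sSup (f '' X), preservesClosedSSup_sSup_image hf,
    sSup_image_clOf_singleton hf, fun g' hg' hg'f F hF => PreservesClosedSSup.eq_sSup_image h𝒞 hg' hg'f hF⟩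
  simpa only [clOf_singleton_subset_iff hF, Set.ofPred_mem_eq] using hF
end

section
/- For arbitrary closure spaces A and B, the pure tensor insertion ⊗ : A × B → A ⊗ B, (x,y) ↦ x ⊗ y (the least tensor containing (x,y)), is a universal separately continuous map: a map f from A × B into a complete lattice C is separately continuous if and only if there is a unique join-preserving map f^∨ : A ⊗ B → C with f(x,y) = f^∨(x ⊗ y); this map is given by f^∨(T) = ⋁ f[T]. -/
/-- A tensor between closure spaces: all slices in either coordinate are closed. -/
def IsTensorRel {α β : Type*} (𝒞A : Set (Set α)) (𝒞B : Set (Set β)) (T : Set (α × β)) : Prop :=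
  (∀ x : α, {y | (x, y) ∈ T} ∈ 𝒞B) ∧ (∀ y : β, {x | (x, y) ∈ T} ∈ 𝒞A)

/-- The tensor closure of a relation: the least tensor containing it. -/
def tensorCl {α β : Type*} (𝒞A : Set (Set α)) (𝒞B : Set (Set β)) (R : Set (α × β)) :
    Set (α × β) :=
  ⋂₀ {T | IsTensorRel 𝒞A 𝒞B T ∧ R ⊆ T}

/-- The pure tensor `x ⊗ y`: the least tensor containing `(x, y)`. -/
def pureTensor {α β : Type*} (𝒞A : Set (Set α)) (𝒞B : Set (Set β)) (x : α) (y : β) :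
    Set (α × β) :=
  ⋂₀ {T | IsTensorRel 𝒞A 𝒞B T ∧ (x, y) ∈ T}

section Helpers

variable {α β : Type*} {𝒞A : Set (Set α)} {𝒞B : Set (Set β)}

lemma closed_univ {𝒞 : Set (Set α)} (h : IsClosureSystem 𝒞) : Set.univ ∈ 𝒞 := by
  have := h ∅ (by simp); simpa using this

lemma tensor_univ (hA : IsClosureSystem 𝒞A) (hB : IsClosureSystem 𝒞B) :
    IsTensorRel 𝒞A 𝒞B Set.univ :=
  ⟨fun _ => by simpa using closed_univ hB, fun _ => by simpa using closed_univ hA⟩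

lemma subset_tensorCl (R : Set (α × β)) : R ⊆ tensorCl 𝒞A 𝒞B R := by
  intro p hp
  exact fun T hT => hT.2 hp

lemma tensorCl_subset {R T : Set (α × β)} (hT : IsTensorRel 𝒞A 𝒞B T) (hR : R ⊆ T) :
    tensorCl 𝒞A 𝒞B R ⊆ T :=
  Set.sInter_subset_of_mem ⟨hT, hR⟩

lemma tensorCl_tensor (hA : IsClosureSystem 𝒞A) (hB : IsClosureSystem 𝒞B)
    (R : Set (α × β)) : IsTensorRel 𝒞A 𝒞B (tensorCl 𝒞A 𝒞B R) := by
  constructor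
  · intro x
    have he : {y | (x, y) ∈ tensorCl 𝒞A 𝒞B R} =
        ⋂₀ {S | ∃ T, (IsTensorRel 𝒞A 𝒞B T ∧ R ⊆ T) ∧ S = {y | (x, y) ∈ T}} := by
      ext y
      simp only [tensorCl, Set.mem_setOf_eq, Set.mem_sInter]
      constructor
      · rintro h S ⟨T, hT, rfl⟩; exact h T hT
      · intro h T hT; exact h _ ⟨T, hT, rfl⟩
    rw [he]
    exact hB _ (by rintro S ⟨T, ⟨hT, _⟩, rfl⟩; exact hT.1 x)
  · intro y
    have he : {x | (x, y) ∈ tensorCl 𝒞A 𝒞B R} =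
        ⋂₀ {S | ∃ T, (IsTensorRel 𝒞A 𝒞B T ∧ R ⊆ T) ∧ S = {x | (x, y) ∈ T}} := by
      ext x
      simp only [tensorCl, Set.mem_setOf_eq, Set.mem_sInter]
      constructor
      · rintro h S ⟨T, hT, rfl⟩; exact h T hT
      · intro h T hT; exact h _ ⟨T, hT, rfl⟩
    rw [he]
    exact hA _ (by rintro S ⟨T, ⟨hT, _⟩, rfl⟩; exact hT.2 y)

lemma tensorCl_of_tensor {T : Set (α × β)} (hT : IsTensorRel 𝒞A 𝒞B T) :
    tensorCl 𝒞A 𝒞B T = T :=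
  le_antisymm (tensorCl_subset hT subset_rfl) (subset_tensorCl T)

lemma pureTensor_eq_tensorCl (x : α) (y : β) :
    pureTensor 𝒞A 𝒞B x y = tensorCl 𝒞A 𝒞B {(x, y)} := by
  unfold pureTensor tensorCl
  congr 1
  ext T
  simp [Set.singleton_subset_iff]

lemma mem_pureTensor_self (x : α) (y : β) : (x, y) ∈ pureTensor 𝒞A 𝒞B x y :=
  fun T hT => hT.2

lemma pureTensor_subset {T : Set (α × β)} (hT : IsTensorRel 𝒞A 𝒞B T) {x : α} {y : β}
    (h : (x, y) ∈ T) : pureTensor 𝒞A 𝒞B x y ⊆ T :=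
  Set.sInter_subset_of_mem ⟨hT, h⟩

lemma pureTensor_tensor (hA : IsClosureSystem 𝒞A) (hB : IsClosureSystem 𝒞B) (x : α) (y : β) :
    IsTensorRel 𝒞A 𝒞B (pureTensor 𝒞A 𝒞B x y) := by
  rw [pureTensor_eq_tensorCl]; exact tensorCl_tensor hA hB _

/-- The tensor closure of a relation equals the tensor closure of the union of the
pure tensors of its points. -/
lemma tensorCl_pures (R : Set (α × β)) :
    tensorCl 𝒞A 𝒞B (⋃₀ ((fun p : α × β => pureTensor 𝒞A 𝒞B p.1 p.2) '' R)) =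
      tensorCl 𝒞A 𝒞B R := by
  have hset : {T | IsTensorRel 𝒞A 𝒞B T ∧
        (⋃₀ ((fun p : α × β => pureTensor 𝒞A 𝒞B p.1 p.2) '' R)) ⊆ T}
      = {T | IsTensorRel 𝒞A 𝒞B T ∧ R ⊆ T} := by
    ext T
    constructor
    · rintro ⟨hT, h⟩
      refine ⟨hT, fun p hp => ?_⟩
      have hm : pureTensor 𝒞A 𝒞B p.1 p.2 ∈
          (fun p : α × β => pureTensor 𝒞A 𝒞B p.1 p.2) '' R := ⟨p, hp, rfl⟩
      exact h (Set.subset_sUnion_of_mem hm (mem_pureTensor_self p.1 p.2))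
    · rintro ⟨hT, h⟩
      refine ⟨hT, fun q hq => ?_⟩
      obtain ⟨S, ⟨p, hp, rfl⟩, hqS⟩ := hq
      exact pureTensor_subset hT (h hp) hqS
  unfold tensorCl
  rw [hset]

end Helpers

/-- The pure tensor insertion `⊗ : A × B → A ⊗ B` is a universal separately
continuous map: a map `f : A × B → C` into a complete lattice (closed sets: principal
ideals) is separately continuous iff there is a unique join-preserving map
`f^∨ : A ⊗ B → C` with `f (x, y) = f^∨ (x ⊗ y)`, and this map is given by
`f^∨(T) = ⋁ f[T]`. (Joins in `A ⊗ B` are given by the tensor closure of unions.) -/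
theorem stmt_8 {α β γ : Type*} [CompleteLattice γ]
    (𝒞A : Set (Set α)) (𝒞B : Set (Set β))
    (hA : IsClosureSystem 𝒞A) (hB : IsClosureSystem 𝒞B) (f : α × β → γ) :
    ((∀ x : α, ∀ c : γ, (fun y => f (x, y)) ⁻¹' Set.Iic c ∈ 𝒞B) ∧
     (∀ y : β, ∀ c : γ, (fun x => f (x, y)) ⁻¹' Set.Iic c ∈ 𝒞A)) ↔
    ∃ g : Set (α × β) → γ,
      (∀ 𝒮 : Set (Set (α × β)), (∀ T ∈ 𝒮, IsTensorRel 𝒞A 𝒞B T) →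
        g (tensorCl 𝒞A 𝒞B (⋃₀ 𝒮)) = sSup (g '' 𝒮)) ∧
      (∀ x y, g (pureTensor 𝒞A 𝒞B x y) = f (x, y)) ∧
      (∀ T, IsTensorRel 𝒞A 𝒞B T → g T = sSup (f '' T)) ∧
      ∀ g' : Set (α × β) → γ,
        (∀ 𝒮 : Set (Set (α × β)), (∀ T ∈ 𝒮, IsTensorRel 𝒞A 𝒞B T) →
          g' (tensorCl 𝒞A 𝒞B (⋃₀ 𝒮)) = sSup (g' '' 𝒮)) →
        (∀ x y, g' (pureTensor 𝒞A 𝒞B x y) = f (x, y)) →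
        ∀ T, IsTensorRel 𝒞A 𝒞B T → g' T = g T := by
  constructor
  · rintro ⟨hx, hy⟩
    have hIic : ∀ c : γ, IsTensorRel 𝒞A 𝒞B {p | f p ≤ c} := fun c =>
      ⟨fun x => hx x c, fun y => hy y c⟩
    have key : ∀ R : Set (α × β), sSup (f '' tensorCl 𝒞A 𝒞B R) = sSup (f '' R) := by
      intro R
      apply le_antisymm
      · apply sSup_le
        rintro _ ⟨p, hp, rfl⟩
        have hsub : tensorCl 𝒞A 𝒞B R ⊆ {q | f q ≤ sSup (f '' R)} :=
          tensorCl_subset (hIic _) (fun q hq => le_sSup ⟨q, hq, rfl⟩)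
        exact hsub hp
      · exact sSup_le_sSup (Set.image_mono (subset_tensorCl R))
    refine ⟨fun T => sSup (f '' T), ?_, ?_, fun T _ => rfl, ?_⟩
    · intro 𝒮 h𝒮
      show sSup (f '' tensorCl 𝒞A 𝒞B (⋃₀ 𝒮)) = sSup ((fun T => sSup (f '' T)) '' 𝒮)
      rw [key]
      apply le_antisymm
      · apply sSup_le
        rintro _ ⟨p, hp, rfl⟩
        obtain ⟨T, hT𝒮, hpT⟩ := hp
        have hm : sSup (f '' T) ∈ (fun T => sSup (f '' T)) '' 𝒮 := ⟨T, hT𝒮, rfl⟩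
        calc f p ≤ sSup (f '' T) := le_sSup ⟨p, hpT, rfl⟩
          _ ≤ _ := le_sSup hm
      · apply sSup_le
        rintro _ ⟨T, hT, rfl⟩
        show sSup (f '' T) ≤ _
        apply sSup_le
        rintro _ ⟨p, hpT, rfl⟩
        exact le_sSup ⟨p, ⟨T, hT, hpT⟩, rfl⟩
    · intro x y
      show sSup (f '' pureTensor 𝒞A 𝒞B x y) = f (x, y)
      rw [pureTensor_eq_tensorCl, key]
      simp
    · intro g' hj' hp' T hT
      have h1 : g' T = sSup (g' '' ((fun p : α × β => pureTensor 𝒞A 𝒞B p.1 p.2) '' T)) := by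
        have := hj' ((fun p : α × β => pureTensor 𝒞A 𝒞B p.1 p.2) '' T)
          (by rintro _ ⟨p, -, rfl⟩; exact pureTensor_tensor hA hB p.1 p.2)
        rwa [tensorCl_pures, tensorCl_of_tensor hT] at this
      rw [h1, Set.image_image]
      have hfe : (fun p : α × β => g' (pureTensor 𝒞A 𝒞B p.1 p.2)) = f :=
        funext fun p => by rw [hp' p.1 p.2]
      rw [hfe]
  · rintro ⟨g, hj, hp, -, -⟩
    have gmono : ∀ T1 T2, IsTensorRel 𝒞A 𝒞B T1 → IsTensorRel 𝒞A 𝒞B T2 → T1 ⊆ T2 →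
        g T1 ≤ g T2 := by
      intro T1 T2 h1 h2 hsub
      have hu : ⋃₀ ({T1, T2} : Set (Set (α × β))) = T2 := by
        rw [Set.sUnion_pair]
        exact Set.union_eq_self_of_subset_left hsub
      have hh := hj {T1, T2} (by rintro T (rfl | rfl) <;> assumption)
      rw [hu, tensorCl_of_tensor h2] at hh
      rw [hh]
      exact le_sSup ⟨T1, by simp, rfl⟩
    have main : ∀ (R : Set (α × β)) (c : γ), (∀ p ∈ R, f p ≤ c) →
        ∀ p ∈ tensorCl 𝒞A 𝒞B R, f p ≤ c := by
      intro R c hRc p hpT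
      have hTt : IsTensorRel 𝒞A 𝒞B (tensorCl 𝒞A 𝒞B R) := tensorCl_tensor hA hB R
      have hgT : g (tensorCl 𝒞A 𝒞B R) ≤ c := by
        have hh := hj ((fun p : α × β => pureTensor 𝒞A 𝒞B p.1 p.2) '' R)
          (by rintro _ ⟨q, -, rfl⟩; exact pureTensor_tensor hA hB q.1 q.2)
        rw [tensorCl_pures] at hh
        rw [hh]
        apply sSup_le
        rintro _ ⟨_, ⟨q, hqR, rfl⟩, rfl⟩
        rw [hp q.1 q.2]
        exact hRc q hqR
      have h1 : g (pureTensor 𝒞A 𝒞B p.1 p.2) ≤ g (tensorCl 𝒞A 𝒞B R) :=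
        gmono _ _ (pureTensor_tensor hA hB p.1 p.2) hTt (pureTensor_subset hTt hpT)
      rw [hp p.1 p.2] at h1
      exact le_trans h1 hgT
    constructor
    · intro x c
      have heq : {y | (x, y) ∈ tensorCl 𝒞A 𝒞B ({x} ×ˢ ((fun y => f (x, y)) ⁻¹' Set.Iic c))}
          = (fun y => f (x, y)) ⁻¹' Set.Iic c := by
        apply Set.Subset.antisymm
        · intro y' hy'
          exact main _ c (by rintro ⟨a, b⟩ ⟨ha, hb⟩; rw [Set.mem_singleton_iff] at ha; subst ha; exact hb) _ hy'
        · intro y hyY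
          exact subset_tensorCl _ ⟨rfl, hyY⟩
      rw [← heq]
      exact (tensorCl_tensor hA hB _).1 x
    · intro y c
      have heq : {x | (x, y) ∈ tensorCl 𝒞A 𝒞B (((fun x => f (x, y)) ⁻¹' Set.Iic c) ×ˢ {y})}
          = (fun x => f (x, y)) ⁻¹' Set.Iic c := by
        apply Set.Subset.antisymm
        · intro x' hx'
          exact main _ c (by rintro ⟨a, b⟩ ⟨ha, hb⟩; rw [Set.mem_singleton_iff] at hb; subst hb; exact ha) _ hx'
        · intro x hxY
          exact subset_tensorCl _ ⟨hxY, rfl⟩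
      rw [← heq]
      exact (tensorCl_tensor hA hB _).2 y
end

section
/- For any two closure spaces A and B, the map h : A ⊗ B → 𝒞A ⊗ 𝒞B, T ↦ {(X,Y) ∈ 𝒞A × 𝒞B : X × Y ⊆ T}, is an order isomorphism between the tensor product of A and B and the tensor product of their complete lattices of closed sets. -/
/-- A tensor between the complete lattices of closed sets `𝒞A` and `𝒞B` (joins given by
closure of unions): a down-set `𝒯 ⊆ 𝒞A × 𝒞B` closed under componentwise joins of
rectangles. -/
def IsCLTensor {α β : Type*} (𝒞A : Set (Set α)) (𝒞B : Set (Set β))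
    (𝒯 : Set (Set α × Set β)) : Prop :=
  𝒯 ⊆ 𝒞A ×ˢ 𝒞B ∧
  (∀ p q : Set α × Set β, p ∈ 𝒯 → q.1 ∈ 𝒞A → q.2 ∈ 𝒞B → q.1 ⊆ p.1 → q.2 ⊆ p.2 → q ∈ 𝒯) ∧
  (∀ (𝒳 : Set (Set α)) (𝒴 : Set (Set β)), 𝒳 ⊆ 𝒞A → 𝒴 ⊆ 𝒞B → 𝒳 ×ˢ 𝒴 ⊆ 𝒯 →
    (clOf 𝒞A (⋃₀ 𝒳), clOf 𝒞B (⋃₀ 𝒴)) ∈ 𝒯)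

namespace Stmt9Aux

variable {α β : Type*} {𝒞A : Set (Set α)} {𝒞B : Set (Set β)}

lemma clOf_mem (hA : IsClosureSystem 𝒞A) (X : Set α) : clOf 𝒞A X ∈ 𝒞A :=
  hA _ (fun _ hF => hF.1)

lemma subset_clOf (X : Set α) : X ⊆ clOf 𝒞A X :=
  fun _ hx _ hF => hF.2 hx

lemma clOf_subset {X F : Set α} (hF : F ∈ 𝒞A) (hXF : X ⊆ F) : clOf 𝒞A X ⊆ F :=
  fun _ hx => hx F ⟨hF, hXF⟩

lemma clOf_eq_of_mem {X : Set α} (hX : X ∈ 𝒞A) : clOf 𝒞A X = X :=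
  subset_antisymm (clOf_subset hX subset_rfl) (subset_clOf X)

/-- closure of a rectangle stays inside a tensor -/
lemma rect_cl {T : Set (α × β)} (hT : IsTensorRel 𝒞A 𝒞B T) {P : Set α} {Q : Set β}
    (h : ∀ x ∈ P, ∀ y ∈ Q, (x, y) ∈ T) :
    ∀ x ∈ clOf 𝒞A P, ∀ y ∈ clOf 𝒞B Q, (x, y) ∈ T := by
  have step1 : ∀ x ∈ P, ∀ y ∈ clOf 𝒞B Q, (x, y) ∈ T := by
    intro x hx y hy
    exact clOf_subset (hT.1 x) (fun y' hy' => h x hx y' hy') hy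
  intro x hx y hy
  exact clOf_subset (hT.2 y) (fun x' hx' => step1 x' hx' y hy) hx

def hmap (𝒞A : Set (Set α)) (𝒞B : Set (Set β)) (T : Set (α × β)) : Set (Set α × Set β) :=
  {p | p.1 ∈ 𝒞A ∧ p.2 ∈ 𝒞B ∧ p.1 ×ˢ p.2 ⊆ T}

def gmap (𝒞A : Set (Set α)) (𝒞B : Set (Set β)) (𝒯 : Set (Set α × Set β)) : Set (α × β) :=
  {z | (clOf 𝒞A {z.1}, clOf 𝒞B {z.2}) ∈ 𝒯}

lemma hmap_isCLTensor (hA : IsClosureSystem 𝒞A) (hB : IsClosureSystem 𝒞B)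
    {T : Set (α × β)} (hT : IsTensorRel 𝒞A 𝒞B T) : IsCLTensor 𝒞A 𝒞B (hmap 𝒞A 𝒞B T) := by
  refine ⟨fun p hp => ⟨hp.1, hp.2.1⟩, ?_, ?_⟩
  · intro p q hp hq1 hq2 h1 h2
    exact ⟨hq1, hq2, fun z hz => hp.2.2 ⟨h1 hz.1, h2 hz.2⟩⟩
  · intro 𝒳 𝒴 h𝒳 h𝒴 hprod
    refine ⟨clOf_mem hA _, clOf_mem hB _, fun z hz => ?_⟩
    refine rect_cl hT (fun x hx y hy => ?_) z.1 hz.1 z.2 hz.2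
    obtain ⟨X, hX, hxX⟩ := hx
    obtain ⟨Y, hY, hyY⟩ := hy
    exact (hprod (Set.mk_mem_prod hX hY)).2.2 ⟨hxX, hyY⟩

lemma gmap_isTensorRel (hA : IsClosureSystem 𝒞A) (hB : IsClosureSystem 𝒞B)
    {𝒯 : Set (Set α × Set β)} (h𝒯 : IsCLTensor 𝒞A 𝒞B 𝒯) :
    IsTensorRel 𝒞A 𝒞B (gmap 𝒞A 𝒞B 𝒯) := by
  constructor
  · intro x
    set S : Set β := {y | (clOf 𝒞A {x}, clOf 𝒞B {y}) ∈ 𝒯} with hS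
    have key : (clOf 𝒞A (⋃₀ {clOf 𝒞A {x}}), clOf 𝒞B (⋃₀ ((fun y => clOf 𝒞B {y}) '' S))) ∈ 𝒯 := by
      apply h𝒯.2.2
      · intro F hF; rcases hF with rfl; exact clOf_mem hA _
      · rintro F ⟨y, _, rfl⟩; exact clOf_mem hB _
      · rintro ⟨P, Q⟩ ⟨hP, ⟨y, hy, rfl⟩⟩
        rcases hP with rfl
        exact hy
    have e1 : clOf 𝒞A (⋃₀ {clOf 𝒞A {x}}) = clOf 𝒞A {x} := by
      rw [Set.sUnion_singleton, clOf_eq_of_mem (clOf_mem hA _)]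
    rw [e1] at key
    have hSsub : S ⊆ ⋃₀ ((fun y => clOf 𝒞B {y}) '' S) := by
      intro y hy
      exact ⟨clOf 𝒞B {y}, ⟨y, hy, rfl⟩, subset_clOf _ rfl⟩
    have hsubS : clOf 𝒞B (⋃₀ ((fun y => clOf 𝒞B {y}) '' S)) ⊆ S := by
      intro y hy
      refine h𝒯.2.1 _ (clOf 𝒞A {x}, clOf 𝒞B {y}) key (clOf_mem hA _) (clOf_mem hB _)
        subset_rfl ?_
      exact clOf_subset (clOf_mem hB _) (Set.singleton_subset_iff.2 hy)
    have : S = clOf 𝒞B (⋃₀ ((fun y => clOf 𝒞B {y}) '' S)) :=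
      subset_antisymm (hSsub.trans (subset_clOf _)) hsubS
    rw [show {y | (x, y) ∈ gmap 𝒞A 𝒞B 𝒯} = S from rfl, this]
    exact clOf_mem hB _
  · intro y
    set S : Set α := {x | (clOf 𝒞A {x}, clOf 𝒞B {y}) ∈ 𝒯} with hS
    have key : (clOf 𝒞A (⋃₀ ((fun x => clOf 𝒞A {x}) '' S)), clOf 𝒞B (⋃₀ {clOf 𝒞B {y}})) ∈ 𝒯 := by
      apply h𝒯.2.2
      · rintro F ⟨x, _, rfl⟩; exact clOf_mem hA _
      · intro F hF; rcases hF with rfl; exact clOf_mem hB _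
      · rintro ⟨P, Q⟩ ⟨⟨x, hx, rfl⟩, hQ⟩
        rcases hQ with rfl
        exact hx
    have e1 : clOf 𝒞B (⋃₀ {clOf 𝒞B {y}}) = clOf 𝒞B {y} := by
      rw [Set.sUnion_singleton, clOf_eq_of_mem (clOf_mem hB _)]
    rw [e1] at key
    have hSsub : S ⊆ ⋃₀ ((fun x => clOf 𝒞A {x}) '' S) := by
      intro x hx
      exact ⟨clOf 𝒞A {x}, ⟨x, hx, rfl⟩, subset_clOf _ rfl⟩
    have hsubS : clOf 𝒞A (⋃₀ ((fun x => clOf 𝒞A {x}) '' S)) ⊆ S := by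
      intro x hx
      refine h𝒯.2.1 _ (clOf 𝒞A {x}, clOf 𝒞B {y}) key (clOf_mem hA _) (clOf_mem hB _) ?_ subset_rfl
      exact clOf_subset (clOf_mem hA _) (Set.singleton_subset_iff.2 hx)
    have : S = clOf 𝒞A (⋃₀ ((fun x => clOf 𝒞A {x}) '' S)) :=
      subset_antisymm (hSsub.trans (subset_clOf _)) hsubS
    rw [show {x | (x, y) ∈ gmap 𝒞A 𝒞B 𝒯} = S from rfl, this]
    exact clOf_mem hA _

lemma gmap_hmap (hA : IsClosureSystem 𝒞A) (hB : IsClosureSystem 𝒞B)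
    {T : Set (α × β)} (hT : IsTensorRel 𝒞A 𝒞B T) : gmap 𝒞A 𝒞B (hmap 𝒞A 𝒞B T) = T := by
  ext z
  constructor
  · intro hz
    exact hz.2.2 ⟨subset_clOf _ rfl, subset_clOf _ rfl⟩
  · intro hz
    refine ⟨clOf_mem hA _, clOf_mem hB _, fun w hw => ?_⟩
    have := rect_cl hT (P := {z.1}) (Q := {z.2})
      (fun x hx y hy => by rcases hx with rfl; rcases hy with rfl; exact hz)
    exact this w.1 hw.1 w.2 hw.2

lemma hmap_gmap (hA : IsClosureSystem 𝒞A) (hB : IsClosureSystem 𝒞B)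
    {𝒯 : Set (Set α × Set β)} (h𝒯 : IsCLTensor 𝒞A 𝒞B 𝒯) : hmap 𝒞A 𝒞B (gmap 𝒞A 𝒞B 𝒯) = 𝒯 := by
  ext ⟨X, Y⟩
  constructor
  · rintro ⟨hX, hY, hsub⟩
    have key : (clOf 𝒞A (⋃₀ ((fun x => clOf 𝒞A {x}) '' X)),
        clOf 𝒞B (⋃₀ ((fun y => clOf 𝒞B {y}) '' Y))) ∈ 𝒯 := by
      apply h𝒯.2.2
      · rintro F ⟨x, _, rfl⟩; exact clOf_mem hA _
      · rintro F ⟨y, _, rfl⟩; exact clOf_mem hB _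
      · rintro ⟨P, Q⟩ ⟨⟨x, hx, rfl⟩, ⟨y, hy, rfl⟩⟩
        exact hsub (Set.mk_mem_prod hx hy)
    have eX : ⋃₀ ((fun x => clOf 𝒞A {x}) '' X) = X := by
      apply subset_antisymm
      · rintro x ⟨F, ⟨x', hx', rfl⟩, hxF⟩
        exact clOf_subset hX (Set.singleton_subset_iff.2 hx') hxF
      · intro x hx
        exact ⟨clOf 𝒞A {x}, ⟨x, hx, rfl⟩, subset_clOf _ rfl⟩
    have eY : ⋃₀ ((fun y => clOf 𝒞B {y}) '' Y) = Y := by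
      apply subset_antisymm
      · rintro y ⟨F, ⟨y', hy', rfl⟩, hyF⟩
        exact clOf_subset hY (Set.singleton_subset_iff.2 hy') hyF
      · intro y hy
        exact ⟨clOf 𝒞B {y}, ⟨y, hy, rfl⟩, subset_clOf _ rfl⟩
    rwa [eX, eY, clOf_eq_of_mem hX, clOf_eq_of_mem hY] at key
  · intro h
    have hX := (h𝒯.1 h).1
    have hY := (h𝒯.1 h).2
    refine ⟨hX, hY, fun z hz => ?_⟩
    exact h𝒯.2.1 _ _ h (clOf_mem hA _) (clOf_mem hB _)
      (clOf_subset hX (Set.singleton_subset_iff.2 hz.1))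
      (clOf_subset hY (Set.singleton_subset_iff.2 hz.2))

end Stmt9Aux

/-- For closure spaces `A`, `B`, the map
`h : T ↦ {(X,Y) ∈ 𝒞A × 𝒞B : X × Y ⊆ T}` is an order isomorphism from the tensor product
`A ⊗ B` onto the tensor product `𝒞A ⊗ 𝒞B` of the complete lattices of closed sets. -/
theorem stmt_9 {α β : Type*} (𝒞A : Set (Set α)) (𝒞B : Set (Set β))
    (hA : IsClosureSystem 𝒞A) (hB : IsClosureSystem 𝒞B) :
    ∃ e : {T : Set (α × β) // IsTensorRel 𝒞A 𝒞B T} ≃o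
          {𝒯 : Set (Set α × Set β) // IsCLTensor 𝒞A 𝒞B 𝒯},
      ∀ T : {T : Set (α × β) // IsTensorRel 𝒞A 𝒞B T},
        (e T : Set (Set α × Set β)) =
          {p | p.1 ∈ 𝒞A ∧ p.2 ∈ 𝒞B ∧ p.1 ×ˢ p.2 ⊆ (T : Set (α × β))} := by
  open Stmt9Aux in
  refine ⟨{
    toFun := fun T => ⟨hmap 𝒞A 𝒞B T.1, hmap_isCLTensor hA hB T.2⟩
    invFun := fun 𝒯 => ⟨gmap 𝒞A 𝒞B 𝒯.1, gmap_isTensorRel hA hB 𝒯.2⟩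
    left_inv := fun T => Subtype.ext (gmap_hmap hA hB T.2)
    right_inv := fun 𝒯 => Subtype.ext (hmap_gmap hA hB 𝒯.2)
    map_rel_iff' := ?_ }, fun T => rfl⟩
  intro T T'
  constructor
  · intro h
    have : gmap 𝒞A 𝒞B (hmap 𝒞A 𝒞B T.1) ⊆ gmap 𝒞A 𝒞B (hmap 𝒞A 𝒞B T'.1) := fun z hz => h hz
    rwa [gmap_hmap hA hB T.2, gmap_hmap hA hB T'.2] at this
  · intro h p hp
    exact ⟨hp.1, hp.2.1, hp.2.2.trans h⟩
end

section
/- For closure spaces A and B with least closed sets ⊥_A = cl(∅) and ⊥_B = cl(∅), the assignments T ↦ T \ ((⊥_A × UB) ∪ (UA × ⊥_B)) and T' ↦ T' ∪ ((⊥_A × UB) ∪ (UA × ⊥_B)) are mutually inverse order isomorphisms between the tensor product A ⊗ B and the tensor product Ǎ ⊗ B̌ of the subspaces induced on UA \ ⊥_A and UB \ ⊥_B. -/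
/-- The obligatory part `∅̄ = (⊥_A × UB) ∪ (UA × ⊥_B)` of every tensor, where
`⊥_A = cl(∅)`. -/
def botRect {α β : Type*} (𝒞A : Set (Set α)) (𝒞B : Set (Set β)) : Set (α × β) :=
  (clOf 𝒞A ∅) ×ˢ (Set.univ : Set β) ∪ (Set.univ : Set α) ×ˢ (clOf 𝒞B ∅)

/-- A tensor between the unbounded coreflections `Ǎ` and `B̌` (subspaces on the complements
of `⊥_A`, `⊥_B`, whose closed sets are traces of closed sets): a subset of `Ǎ × B̌` whose
slices are closed in the subspaces. -/
def IsTruncTensorRel {α β : Type*} (𝒞A : Set (Set α)) (𝒞B : Set (Set β))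
    (T : Set (α × β)) : Prop :=
  T ⊆ (clOf 𝒞A ∅)ᶜ ×ˢ (clOf 𝒞B ∅)ᶜ ∧
  (∀ x : α, ∃ G ∈ 𝒞B, {y | (x, y) ∈ T} = G \ clOf 𝒞B ∅) ∧
  (∀ y : β, ∃ F ∈ 𝒞A, {x | (x, y) ∈ T} = F \ clOf 𝒞A ∅)


lemma clOf_empty_mem {α : Type*} {𝒞 : Set (Set α)} (h : IsClosureSystem 𝒞) :
    clOf 𝒞 ∅ ∈ 𝒞 :=
  h {F | F ∈ 𝒞 ∧ ∅ ⊆ F} (fun _ hF => hF.1)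

lemma clOf_empty_subset {α : Type*} {𝒞 : Set (Set α)} {F : Set α} (hF : F ∈ 𝒞) :
    clOf 𝒞 ∅ ⊆ F :=
  Set.sInter_subset_of_mem ⟨hF, Set.empty_subset F⟩

lemma univ_mem_cs {α : Type*} {𝒞 : Set (Set α)} (h : IsClosureSystem 𝒞) :
    (Set.univ : Set α) ∈ 𝒞 := by
  have := h ∅ (Set.empty_subset _)
  simpa using this

/-- For closure spaces `A`, `B`, the assignments `T ↦ T \ ∅̄` and
`T' ↦ T' ∪ ∅̄` are mutually inverse order isomorphisms between the tensor product `A ⊗ B`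
and the tensor product `Ǎ ⊗ B̌` of the unbounded coreflections. -/
theorem stmt_11 {α β : Type*} (𝒞A : Set (Set α)) (𝒞B : Set (Set β))
    (hA : IsClosureSystem 𝒞A) (hB : IsClosureSystem 𝒞B) :
    ∃ e : {T : Set (α × β) // IsTensorRel 𝒞A 𝒞B T} ≃o
          {T : Set (α × β) // IsTruncTensorRel 𝒞A 𝒞B T},
      (∀ T : {T : Set (α × β) // IsTensorRel 𝒞A 𝒞B T},
        (e T : Set (α × β)) = (T : Set (α × β)) \ botRect 𝒞A 𝒞B) ∧
      (∀ T' : {T : Set (α × β) // IsTruncTensorRel 𝒞A 𝒞B T},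
        (e.symm T' : Set (α × β)) = (T' : Set (α × β)) ∪ botRect 𝒞A 𝒞B) := by
  set R := botRect 𝒞A 𝒞B with hR
  -- every tensor contains R
  have hbot : ∀ T : Set (α × β), IsTensorRel 𝒞A 𝒞B T → R ⊆ T := by
    intro T hT p hp
    rcases hp with hp | hp
    · exact clOf_empty_subset (hT.2 p.2) hp.1
    · exact clOf_empty_subset (hT.1 p.1) hp.2
  have fwd : ∀ T : Set (α × β), IsTensorRel 𝒞A 𝒞B T →
      IsTruncTensorRel 𝒞A 𝒞B (T \ R) := by
    intro T hT
    refine ⟨?_, ?_, ?_⟩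
    · intro p hp
      constructor
      · intro hx; exact hp.2 (Or.inl ⟨hx, trivial⟩)
      · intro hy; exact hp.2 (Or.inr ⟨trivial, hy⟩)
    · intro x
      by_cases hx : x ∈ clOf 𝒞A ∅
      · refine ⟨clOf 𝒞B ∅, clOf_empty_mem hB, ?_⟩
        ext y
        simp only [Set.mem_setOf_eq, Set.mem_diff, hR, botRect]
        constructor
        · rintro ⟨-, h2⟩; exact absurd (Or.inl ⟨hx, trivial⟩) h2
        · rintro ⟨h1, h2⟩; exact absurd h1 h2
      · refine ⟨{y | (x, y) ∈ T}, hT.1 x, ?_⟩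
        ext y
        simp only [Set.mem_setOf_eq, Set.mem_diff, hR, botRect]
        constructor
        · rintro ⟨h1, h2⟩
          exact ⟨h1, fun hy => h2 (Or.inr ⟨trivial, hy⟩)⟩
        · rintro ⟨h1, h2⟩
          refine ⟨h1, ?_⟩
          rintro (⟨hx', -⟩ | ⟨-, hy⟩)
          · exact hx hx'
          · exact h2 hy
    · intro y
      by_cases hy : y ∈ clOf 𝒞B ∅
      · refine ⟨clOf 𝒞A ∅, clOf_empty_mem hA, ?_⟩
        ext x
        simp only [Set.mem_setOf_eq, Set.mem_diff, hR, botRect]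
        constructor
        · rintro ⟨-, h2⟩; exact absurd (Or.inr ⟨trivial, hy⟩) h2
        · rintro ⟨h1, h2⟩; exact absurd h1 h2
      · refine ⟨{x | (x, y) ∈ T}, hT.2 y, ?_⟩
        ext x
        simp only [Set.mem_setOf_eq, Set.mem_diff, hR, botRect]
        constructor
        · rintro ⟨h1, h2⟩
          exact ⟨h1, fun hx => h2 (Or.inl ⟨hx, trivial⟩)⟩
        · rintro ⟨h1, h2⟩
          refine ⟨h1, ?_⟩
          rintro (⟨hx, -⟩ | ⟨-, hy'⟩)
          · exact h2 hx
          · exact hy hy'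
  have bwd : ∀ T : Set (α × β), IsTruncTensorRel 𝒞A 𝒞B T →
      IsTensorRel 𝒞A 𝒞B (T ∪ R) := by
    intro T hT
    constructor
    · intro x
      by_cases hx : x ∈ clOf 𝒞A ∅
      · have : {y | (x, y) ∈ T ∪ R} = Set.univ := by
          ext y; simp only [Set.mem_setOf_eq, Set.mem_univ, iff_true]
          exact Or.inr (Or.inl ⟨hx, trivial⟩)
        rw [this]; exact univ_mem_cs hB
      · obtain ⟨G, hG, hGeq⟩ := hT.2.1 x
        have : {y | (x, y) ∈ T ∪ R} = G := by
          ext y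
          simp only [Set.mem_setOf_eq, Set.mem_union, hR, botRect]
          constructor
          · rintro (h | ⟨hx', -⟩ | ⟨-, hy⟩)
            · have : y ∈ G \ clOf 𝒞B ∅ := hGeq ▸ h
              exact this.1
            · exact absurd hx' hx
            · exact clOf_empty_subset hG hy
          · intro hyG
            by_cases hy : y ∈ clOf 𝒞B ∅
            · exact Or.inr (Or.inr ⟨trivial, hy⟩)
            · left
              show y ∈ {y' | (x, y') ∈ T}
              rw [hGeq]; exact ⟨hyG, hy⟩
        rw [this]; exact hG
    · intro y
      by_cases hy : y ∈ clOf 𝒞B ∅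
      · have : {x | (x, y) ∈ T ∪ R} = Set.univ := by
          ext x; simp only [Set.mem_setOf_eq, Set.mem_univ, iff_true]
          exact Or.inr (Or.inr ⟨trivial, hy⟩)
        rw [this]; exact univ_mem_cs hA
      · obtain ⟨F, hF, hFeq⟩ := hT.2.2 y
        have : {x | (x, y) ∈ T ∪ R} = F := by
          ext x
          simp only [Set.mem_setOf_eq, Set.mem_union, hR, botRect]
          constructor
          · rintro (h | ⟨hx, -⟩ | ⟨-, hy'⟩)
            · have : x ∈ F \ clOf 𝒞A ∅ := hFeq ▸ h
              exact this.1
            · exact clOf_empty_subset hF hx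
            · exact absurd hy' hy
          · intro hxF
            by_cases hx : x ∈ clOf 𝒞A ∅
            · exact Or.inr (Or.inl ⟨hx, trivial⟩)
            · left
              show x ∈ {x' | (x', y) ∈ T}
              rw [hFeq]; exact ⟨hxF, hx⟩
        rw [this]; exact hF
  have hdisj : ∀ T : Set (α × β), IsTruncTensorRel 𝒞A 𝒞B T → T ∩ R = ∅ := by
    intro T hT
    ext p
    simp only [Set.mem_inter_iff, Set.mem_empty_iff_false, iff_false, not_and]
    intro hp
    have := hT.1 hp
    rintro (⟨hx, -⟩ | ⟨-, hy⟩)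
    · exact this.1 hx
    · exact this.2 hy
  refine ⟨{ toFun := fun T => ⟨T.1 \ R, fwd T.1 T.2⟩
            invFun := fun T' => ⟨T'.1 ∪ R, bwd T'.1 T'.2⟩
            left_inv := ?_
            right_inv := ?_
            map_rel_iff' := ?_ }, fun T => rfl, fun T' => rfl⟩
  · intro T
    ext1
    exact Set.diff_union_of_subset (hbot T.1 T.2)
  · intro T'
    ext1
    simp only
    rw [Set.union_diff_right]
    ext p
    simp only [Set.mem_diff, and_iff_left_iff_imp]
    intro hp hpR
    have h := hdisj T'.1 T'.2
    have : p ∈ T'.1 ∩ R := ⟨hp, hpR⟩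
    rw [h] at this
    exact this
  · intro T S
    simp only [Equiv.coe_fn_mk]
    constructor
    · intro h
      have : (T : Set (α × β)) = (T.1 \ R) ∪ R := (Set.diff_union_of_subset (hbot T.1 T.2)).symm
      intro p hp
      rw [this] at hp
      rcases hp with hp | hp
      · exact (Set.diff_subset (s := S.1) (t := R)) (h hp)
      · exact hbot S.1 S.2 hp
    · intro h p hp
      exact ⟨h hp.1, hp.2⟩
end

section
/- Let A and B be bounded posets, neither a singleton, and let b ∈ B. A set S is the pseudocomplement of the tensor A ⊗ b = (A × ↓b) ∪ ∅̄ in the lattice A ⊗_ℓr B of all down-sets T ⊆ A × B whose slices xT and Ty are all principal ideals, if and only if b has a pseudocomplement b* in B and S = A ⊗ b* = (A × ↓b*) ∪ ∅̄. -/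
/-- The least element `∅̄ = ({0_A} × B) ∪ (A × {0_B})` of `A ⊗_ℓr B`. -/
def botRel (A B : Type*) [Preorder A] [OrderBot A] [Preorder B] [OrderBot B] : Set (A × B) :=
  ({⊥} : Set A) ×ˢ (Set.univ : Set B) ∪ (Set.univ : Set A) ×ˢ ({⊥} : Set B)

/-- `S` is the pseudocomplement of `R` in the poset of `ℓr`-tensors: `S` is a tensor, the
only tensor below both `R` and `S` is the bottom tensor `∅̄`, and `S` is the greatest such. -/
def IsTensorPseudocomplOf {A B : Type*} [PartialOrder A] [OrderBot A] [PartialOrder B]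
    [OrderBot B] (R S : Set (A × B)) : Prop :=
  IsLrTensor S ∧ (∀ T, IsLrTensor T → T ⊆ R → T ⊆ S → T = botRel A B) ∧
    ∀ S', IsLrTensor S' → (∀ T, IsLrTensor T → T ⊆ R → T ⊆ S' → T = botRel A B) → S' ⊆ S

section Aux
variable {A B : Type*} [PartialOrder A] [BoundedOrder A] [PartialOrder B] [BoundedOrder B]


lemma mem_botRel {x : A} {y : B} : (x, y) ∈ botRel A B ↔ x = ⊥ ∨ y = ⊥ := by
  simp [botRel, eq_comm]

lemma tensor_mem' {a x : A} {c y : B} :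
    (x, y) ∈ Set.Iic a ×ˢ Set.Iic c ∪ botRel A B ↔ (x ≤ a ∧ y ≤ c) ∨ x = ⊥ ∨ y = ⊥ := by
  simp [botRel, eq_comm]

lemma utensor_mem' {x : A} {c y : B} :
    (x, y) ∈ (Set.univ : Set A) ×ˢ Set.Iic c ∪ botRel A B ↔ y ≤ c ∨ x = ⊥ ∨ y = ⊥ := by
  simp [botRel, eq_comm]

lemma botRel_subset' {T : Set (A × B)} (hT : IsLrTensor T) : botRel A B ⊆ T := by
  rintro ⟨x, y⟩ h
  rcases mem_botRel.mp h with rfl | rfl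
  · obtain ⟨a, ha⟩ := hT.2.2 y
    have hb : (⊥ : A) ∈ Set.Iic a := bot_le
    rw [← ha] at hb; exact hb
  · obtain ⟨c, hc⟩ := hT.2.1 x
    have hb : (⊥ : B) ∈ Set.Iic c := bot_le
    rw [← hc] at hb; exact hb

lemma pure_isTensor' (a : A) (c : B) :
    IsLrTensor (Set.Iic a ×ˢ Set.Iic c ∪ botRel A B) := by
  refine ⟨?_, ?_, ?_⟩
  · rintro ⟨x₁, y₁⟩ ⟨x₂, y₂⟩ ⟨h1, h2⟩ h
    rw [tensor_mem'] at h ⊢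
    rcases h with ⟨ha, hc⟩ | hx | hy
    · exact Or.inl ⟨h1.trans ha, h2.trans hc⟩
    · exact Or.inr (Or.inl (le_bot_iff.mp (hx ▸ h1)))
    · exact Or.inr (Or.inr (le_bot_iff.mp (hy ▸ h2)))
  · intro x
    by_cases hx : x = ⊥
    · exact ⟨⊤, by ext y; simp [tensor_mem', mem_botRel, hx]⟩
    by_cases hxa : x ≤ a
    · refine ⟨c, ?_⟩
      ext y; simp only [Set.mem_setOf_eq, tensor_mem', Set.mem_Iic]
      constructor
      · rintro (⟨_, h⟩ | h | rfl)
        · exact h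
        · exact absurd h hx
        · exact bot_le
      · exact fun h => Or.inl ⟨hxa, h⟩
    · refine ⟨⊥, ?_⟩
      ext y; simp only [Set.mem_setOf_eq, tensor_mem', Set.mem_Iic, le_bot_iff]
      constructor
      · rintro (⟨h, _⟩ | h | rfl)
        · exact absurd h hxa
        · exact absurd h hx
        · rfl
      · rintro rfl; exact Or.inr (Or.inr rfl)
  · intro y
    by_cases hy : y = ⊥
    · exact ⟨⊤, by ext x; simp [tensor_mem', mem_botRel, hy]⟩
    by_cases hyc : y ≤ c
    · refine ⟨a, ?_⟩
      ext x; simp only [Set.mem_setOf_eq, tensor_mem', Set.mem_Iic]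
      constructor
      · rintro (⟨h, _⟩ | rfl | h)
        · exact h
        · exact bot_le
        · exact absurd h hy
      · exact fun h => Or.inl ⟨h, hyc⟩
    · refine ⟨⊥, ?_⟩
      ext x; simp only [Set.mem_setOf_eq, tensor_mem', Set.mem_Iic, le_bot_iff]
      constructor
      · rintro (⟨_, h⟩ | rfl | h)
        · exact absurd h hyc
        · rfl
        · exact absurd h hy
      · rintro rfl; exact Or.inr (Or.inl rfl)

lemma univ_isTensor' (c : B) :
    IsLrTensor ((Set.univ : Set A) ×ˢ Set.Iic c ∪ botRel A B) := by
  have : (Set.univ : Set A) ×ˢ Set.Iic c ∪ botRel A B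
      = Set.Iic (⊤ : A) ×ˢ Set.Iic c ∪ botRel A B := by rw [Set.Iic_top]
  rw [this]; exact pure_isTensor' ⊤ c

lemma inter_prop' {b c : B} (h : ∀ z, z ≤ b → z ≤ c → z = ⊥) :
    ∀ T, IsLrTensor T → T ⊆ (Set.univ : Set A) ×ˢ Set.Iic b ∪ botRel A B →
      T ⊆ (Set.univ : Set A) ×ˢ Set.Iic c ∪ botRel A B → T = botRel A B := by
  intro T hT hTb hTc
  refine Set.Subset.antisymm ?_ (botRel_subset' hT)
  rintro ⟨x, y⟩ hxy
  rw [mem_botRel]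
  rcases utensor_mem'.mp (hTb hxy) with hyb | hx | hy
  · rcases utensor_mem'.mp (hTc hxy) with hyc | hx | hy
    · exact Or.inr (h y hyb hyc)
    · exact Or.inl hx
    · exact Or.inr hy
  · exact Or.inl hx
  · exact Or.inr hy

lemma key' {b : B} {S' : Set (A × B)} (hS' : IsLrTensor S')
    (hint : ∀ T, IsLrTensor T → T ⊆ (Set.univ : Set A) ×ˢ Set.Iic b ∪ botRel A B →
      T ⊆ S' → T = botRel A B)
    {x : A} {y : B} (hxy : (x, y) ∈ S') (hx : x ≠ ⊥) {z : B} (hzb : z ≤ b) (hzy : z ≤ y) :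
    z = ⊥ := by
  have hT := pure_isTensor' x z
  have h1 : Set.Iic x ×ˢ Set.Iic z ∪ botRel A B
      ⊆ (Set.univ : Set A) ×ˢ Set.Iic b ∪ botRel A B := by
    rintro ⟨u, v⟩ h
    rw [utensor_mem']
    rcases tensor_mem'.mp h with ⟨_, hv⟩ | h | h
    · exact Or.inl (hv.trans hzb)
    · exact Or.inr (Or.inl h)
    · exact Or.inr (Or.inr h)
  have h2 : Set.Iic x ×ˢ Set.Iic z ∪ botRel A B ⊆ S' := by
    rintro ⟨u, v⟩ h
    rcases tensor_mem'.mp h with ⟨hu, hv⟩ | h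
    · exact hS'.1 (Prod.mk_le_mk.mpr ⟨hu, hv.trans hzy⟩) hxy
    · exact botRel_subset' hS' (mem_botRel.mpr h)
  have heq := hint _ hT h1 h2
  have hmem : (x, z) ∈ Set.Iic x ×ˢ Set.Iic z ∪ botRel A B :=
    tensor_mem'.mpr (Or.inl ⟨le_rfl, le_rfl⟩)
  rw [heq, mem_botRel] at hmem
  exact hmem.resolve_left hx


end Aux

/-- For bounded posets `A`, `B`, neither a singleton, and `b ∈ B`: a set `S` is
the pseudocomplement of `A ⊗ b = (A × ↓b) ∪ ∅̄` in `A ⊗_ℓr B` iff `b` has a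
pseudocomplement `b*` in `B` and `S = A ⊗ b* = (A × ↓b*) ∪ ∅̄`. -/
theorem stmt_12 {A B : Type*} [PartialOrder A] [BoundedOrder A] [PartialOrder B]
    [BoundedOrder B] [Nontrivial A] [Nontrivial B] (b : B) (S : Set (A × B)) :
    IsTensorPseudocomplOf ((Set.univ : Set A) ×ˢ Set.Iic b ∪ botRel A B) S ↔
      ∃ b' : B, ((∀ z, z ≤ b → z ≤ b' → z = ⊥) ∧ ∀ c, (∀ z, z ≤ b → z ≤ c → z = ⊥) → c ≤ b') ∧
        S = (Set.univ : Set A) ×ˢ Set.Iic b' ∪ botRel A B := by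
  constructor
  · rintro ⟨hS, hint, hmax⟩
    obtain ⟨b', hb'⟩ := hS.2.1 ⊤
    have htop : (⊤ : A) ≠ ⊥ := fun h => (bot_ne_top : (⊥ : A) ≠ ⊤) h.symm
    have P1 : ∀ z, z ≤ b → z ≤ b' → z = ⊥ := by
      intro z hzb hzb'
      have hmem : (⊤, z) ∈ S := by
        have hz : z ∈ Set.Iic b' := hzb'
        rw [← hb'] at hz; exact hz
      exact key' hS hint hmem htop hzb le_rfl
    have P2 : ∀ c, (∀ z, z ≤ b → z ≤ c → z = ⊥) → c ≤ b' := by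
      intro c hc
      have hsub : (Set.univ : Set A) ×ˢ Set.Iic c ∪ botRel A B ⊆ S :=
        hmax _ (univ_isTensor' c) (inter_prop' hc)
      have hmem : (⊤, c) ∈ S := hsub (utensor_mem'.mpr (Or.inl le_rfl))
      have hz : c ∈ Set.Iic b' := by rw [← hb']; exact hmem
      exact hz
    refine ⟨b', ⟨P1, P2⟩, ?_⟩
    refine Set.Subset.antisymm ?_ (hmax _ (univ_isTensor' b') (inter_prop' P1))
    rintro ⟨x, y⟩ h
    rw [utensor_mem']
    by_cases hx : x = ⊥
    · exact Or.inr (Or.inl hx)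
    · exact Or.inl (P2 y (fun z hzb hzy => key' hS hint h hx hzb hzy))
  · rintro ⟨b', ⟨h1, h2⟩, rfl⟩
    refine ⟨univ_isTensor' b', inter_prop' h1, ?_⟩
    rintro S' hS' hintS' ⟨x, y⟩ hmem
    rw [utensor_mem']
    by_cases hx : x = ⊥
    · exact Or.inr (Or.inl hx)
    · exact Or.inl (h2 y (fun z hzb hzy => key' hS' hintS' hmem hx hzb hzy))
end

section
/- Let B be a poset and 𝒴 ⊆ 𝒫(B). Then B is ⊥-𝒴-distributive (for all x ∈ B and Y ∈ 𝒴, if ↓x ∩ ↓Y ⊆ ∅̄ then ↓x ∩ ΔY ⊆ ∅̄, where ∅̄ is the least 𝒴-ideal and Δ is the cut operator) if and only if the complete lattice 𝓘_𝒴(B) of 𝒴-ideals of B is pseudocomplemented. -/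
/-- The cut operator `ΔX = ⋂{↓y : X ⊆ ↓y}`. -/
def cutOp {B : Type*} [Preorder B] (X : Set B) : Set B :=
  {z | ∀ y, X ⊆ Set.Iic y → z ≤ y}

/-- A `𝒴`-ideal: a down-set `I` containing the cut `ΔY` whenever `Y ∈ 𝒴` and `Y ⊆ I`. -/
def IsYIdeal {B : Type*} [Preorder B] (𝒴 : Set (Set B)) (I : Set B) : Prop :=
  IsLowerSet I ∧ ∀ Y ∈ 𝒴, Y ⊆ I → cutOp Y ⊆ I

/-- The least `𝒴`-ideal `∅̄`. -/
def botYIdeal {B : Type*} [Preorder B] (𝒴 : Set (Set B)) : Set B :=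
  ⋂₀ {I | IsYIdeal 𝒴 I}

lemma bot_subset {B : Type*} [Preorder B] {𝒴 : Set (Set B)} {I : Set B}
    (hI : IsYIdeal 𝒴 I) : botYIdeal 𝒴 ⊆ I :=
  Set.sInter_subset_of_mem hI

lemma bot_lower {B : Type*} [Preorder B] {𝒴 : Set (Set B)} :
    IsLowerSet (botYIdeal 𝒴) := by
  intro a b hba ha I hI
  exact hI.1 hba (ha I hI)

lemma Iic_ideal {B : Type*} [Preorder B] (𝒴 : Set (Set B)) (x : B) :
    IsYIdeal 𝒴 (Set.Iic x) :=
  ⟨fun a b hba ha => le_trans hba ha, fun _ _ hY z hz => hz x hY⟩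

lemma cutOp_lower {B : Type*} [Preorder B] (X : Set B) : IsLowerSet (cutOp X) :=
  fun _ b hba ha y hy => le_trans hba (ha y hy)

/-- A poset `B` is `⊥`-`𝒴`-distributive (for all `x` and `Y ∈ 𝒴`:
`↓x ∩ ↓Y ⊆ ∅̄` implies `↓x ∩ ΔY ⊆ ∅̄`) iff the complete lattice of `𝒴`-ideals of `B`
(meets: intersections, bottom: `∅̄`) is pseudocomplemented. -/
theorem stmt_15 {B : Type*} [PartialOrder B] (𝒴 : Set (Set B)) :
    (∀ x : B, ∀ Y ∈ 𝒴, Set.Iic x ∩ {z | ∃ y ∈ Y, z ≤ y} ⊆ botYIdeal 𝒴 →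
       Set.Iic x ∩ cutOp Y ⊆ botYIdeal 𝒴) ↔
    (∀ I, IsYIdeal 𝒴 I → ∃ J, IsYIdeal 𝒴 J ∧ I ∩ J = botYIdeal 𝒴 ∧
       ∀ J', IsYIdeal 𝒴 J' → I ∩ J' = botYIdeal 𝒴 → J' ⊆ J) := by
  constructor
  · intro hdist I hI
    refine ⟨{z | Set.Iic z ∩ I ⊆ botYIdeal 𝒴}, ⟨?_, ?_⟩, ?_, ?_⟩
    · intro a b hba ha w hw
      exact ha ⟨le_trans hw.1 hba, hw.2⟩
    · intro Y hY hYJ z hz w hw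
      -- w ≤ z, w ∈ I; show w ∈ ∅̄
      have hxY : Set.Iic w ∩ {u | ∃ y ∈ Y, u ≤ y} ⊆ botYIdeal 𝒴 := by
        rintro u ⟨hu1, y, hyY, huy⟩
        exact hYJ hyY ⟨huy, hI.1 hu1 hw.2⟩
      exact hdist w Y hY hxY ⟨le_refl w, cutOp_lower Y hw.1 hz⟩
    · apply Set.Subset.antisymm
      · rintro z ⟨hzI, hzJ⟩
        exact hzJ ⟨le_refl z, hzI⟩
      · intro z hz
        exact ⟨bot_subset hI hz, fun w hw => bot_lower hw.1 hz⟩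
    · intro J' hJ' heq z hz w hw
      have : w ∈ I ∩ J' := ⟨hw.2, hJ'.1 hw.1 hz⟩
      rw [heq] at this; exact this
  · intro hpc x Y hY hxY
    obtain ⟨J, hJ, hJeq, hJmax⟩ := hpc (Set.Iic x) (Iic_ideal 𝒴 x)
    have hYJ : Y ⊆ J := by
      intro y hyY
      refine hJmax (Set.Iic y) (Iic_ideal 𝒴 y) ?_ (le_refl y)
      apply Set.Subset.antisymm
      · intro u hu
        exact hxY ⟨hu.1, y, hyY, hu.2⟩
      · intro u hu
        exact ⟨bot_subset (Iic_ideal 𝒴 x) hu, bot_subset (Iic_ideal 𝒴 y) hu⟩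
    intro z hz
    have : z ∈ Set.Iic x ∩ J := ⟨hz.1, hJ.2 Y hY hYJ hz.2⟩
    rw [hJeq] at this; exact this
end

section
/- A complete lattice B is pseudocomplemented if and only if B is 0-distributive (x ∧ y = 0 for all y in a finite set Y implies x ∧ ⋁Y = 0) and meet-continuous at 0 (x ∧ y = 0 for all y in a directed set D implies x ∧ ⋁D = 0). -/
/-- A complete lattice `B` is pseudocomplemented iff it is 0-distributive
(`x ⊓ y = ⊥` for all `y` in a finite set `Y` implies `x ⊓ ⋁Y = ⊥`) and meet-continuous at 0
(`x ⊓ d = ⊥` for all `d` in a directed set `D` implies `x ⊓ ⋁D = ⊥`). -/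
theorem stmt_16 {B : Type*} [CompleteLattice B] :
    (∀ x : B, ∃ y, x ⊓ y = ⊥ ∧ ∀ z, x ⊓ z = ⊥ → z ≤ y) ↔
      ((∀ (x : B) (Y : Finset B), (∀ y ∈ Y, x ⊓ y = ⊥) → x ⊓ Y.sup id = ⊥) ∧
       (∀ (x : B) (D : Set B), D.Nonempty → DirectedOn (· ≤ ·) D →
          (∀ d ∈ D, x ⊓ d = ⊥) → x ⊓ sSup D = ⊥)) := by
  constructor
  · intro h
    constructor
    · intro x Y hY
      obtain ⟨y, hxy, hmax⟩ := h x
      have hle : Y.sup id ≤ y := Finset.sup_le fun z hz => hmax z (hY z hz)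
      exact le_bot_iff.mp (hxy ▸ inf_le_inf_left x hle)
    · intro x D _ _ hD
      obtain ⟨y, hxy, hmax⟩ := h x
      have hle : sSup D ≤ y := sSup_le fun d hd => hmax d (hD d hd)
      exact le_bot_iff.mp (hxy ▸ inf_le_inf_left x hle)
  · rintro ⟨h0, hc⟩ x
    classical
    set Z : Set B := {z | x ⊓ z = ⊥} with hZ
    set D : Set B := {d | ∃ Y : Finset B, ↑Y ⊆ Z ∧ d = Y.sup id} with hD
    refine ⟨sSup Z, ?_, fun z hz => le_sSup hz⟩
    have hsup : sSup D = sSup Z := by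
      apply le_antisymm
      · refine sSup_le fun d hd => ?_
        obtain ⟨Y, hYZ, rfl⟩ := hd
        exact Finset.sup_le fun z hzY => le_sSup (hYZ hzY)
      · refine sSup_le fun z hz => le_sSup ?_
        exact ⟨{z}, by simpa using hz, by simp⟩
    rw [← hsup]
    refine hc x D ⟨⊥, ⟨∅, by simp⟩⟩ ?_ ?_
    · rintro a ⟨Y1, hY1, rfl⟩ b ⟨Y2, hY2, rfl⟩
      refine ⟨(Y1 ∪ Y2).sup id, ⟨Y1 ∪ Y2, ?_, rfl⟩, ?_, ?_⟩
      · push_cast; exact Set.union_subset hY1 hY2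
      · exact Finset.sup_mono Finset.subset_union_left
      · exact Finset.sup_mono Finset.subset_union_right
    · rintro d ⟨Y, hYZ, rfl⟩
      exact h0 x Y fun y hy => hYZ hy
end

section
/- Let B be an atomic, meet-continuous-at-0 complete lattice (every nonzero element lies above an atom, and for every x and every directed D with x ∧ d = 0 for all d ∈ D one has x ∧ ⋁D = 0). Then the least element 0 of B is a meet of meet-irreducible elements; specifically, for each atom a, the polar a^⊥ = {y : a ∧ y = 0} has maximal elements (by Zorn's Lemma), and every such maximal element is meet-irreducible. -/
/-- In an atomic complete lattice that is meet-continuous at 0, the bottom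
element is a meet of meet-irreducible elements; more precisely, for each atom `a` the polar
`a^⊥ = {y : a ⊓ y = ⊥}` has maximal elements, and every such maximal element is
meet-irreducible. -/
theorem stmt_17 {B : Type*} [CompleteLattice B]
    (hatomic : ∀ x : B, x ≠ ⊥ → ∃ a, IsAtom a ∧ a ≤ x)
    (hmc : ∀ (x : B) (D : Set B), D.Nonempty → DirectedOn (· ≤ ·) D →
        (∀ d ∈ D, x ⊓ d = ⊥) → x ⊓ sSup D = ⊥) :
    (∃ M : Set B, (∀ m ∈ M, ∀ x y : B, m = x ⊓ y → m = x ∨ m = y) ∧ sInf M = ⊥) ∧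
    ∀ a : B, IsAtom a →
      (∃ m, a ⊓ m = ⊥ ∧ ∀ y, a ⊓ y = ⊥ → m ≤ y → y = m) ∧
      ∀ m, (a ⊓ m = ⊥ ∧ ∀ y, a ⊓ y = ⊥ → m ≤ y → y = m) →
        ∀ x y : B, m = x ⊓ y → m = x ∨ m = y := by
  -- existence of maximal elements in the polar of any atom
  have hmax : ∀ a : B, IsAtom a →
      ∃ m, a ⊓ m = ⊥ ∧ ∀ y, a ⊓ y = ⊥ → m ≤ y → y = m := by
    intro a _
    obtain ⟨m, hm⟩ := zorn_le₀ {y : B | a ⊓ y = ⊥} (fun c hc hchain => by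
      rcases c.eq_empty_or_nonempty with rfl | hne
      · exact ⟨⊥, by simp, by simp⟩
      · refine ⟨sSup c, ?_, fun z hz => le_sSup hz⟩
        exact hmc a c hne hchain.directedOn (fun d hd => hc hd))
    exact ⟨m, hm.1, fun y hy hmy => le_antisymm (hm.2 hy hmy) hmy⟩
  -- meet-irreducibility of maximal polar elements
  have hirr : ∀ a : B, IsAtom a →
      ∀ m, (a ⊓ m = ⊥ ∧ ∀ y, a ⊓ y = ⊥ → m ≤ y → y = m) →
      ∀ x y : B, m = x ⊓ y → m = x ∨ m = y := by
    intro a ha m ⟨hm, hmaxm⟩ x y hxy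
    by_contra h
    push_neg at h
    obtain ⟨hx, hy⟩ := h
    have hmx : m ≤ x := hxy ▸ inf_le_left
    have hmy : m ≤ y := hxy ▸ inf_le_right
    have hax : a ≤ x := by
      have : a ⊓ x ≠ ⊥ := fun h0 => hx (hmaxm x h0 hmx).symm
      rcases ha.le_iff.mp (inf_le_left : a ⊓ x ≤ a) with h' | h'
      · exact absurd h' this
      · exact le_of_eq h'.symm |>.trans inf_le_right
    have hay : a ≤ y := by
      have : a ⊓ y ≠ ⊥ := fun h0 => hy (hmaxm y h0 hmy).symm
      rcases ha.le_iff.mp (inf_le_left : a ⊓ y ≤ a) with h' | h'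
      · exact absurd h' this
      · exact le_of_eq h'.symm |>.trans inf_le_right
    have ham : a ≤ m := hxy ▸ le_inf hax hay
    have : a = ⊥ := le_bot_iff.mp (hm ▸ le_inf le_rfl ham)
    exact ha.1 this
  refine ⟨⟨{m | ∃ a, IsAtom a ∧ a ⊓ m = ⊥ ∧ ∀ y, a ⊓ y = ⊥ → m ≤ y → y = m}, ?_, ?_⟩,
    fun a ha => ⟨hmax a ha, fun m hm => hirr a ha m hm⟩⟩
  · rintro m ⟨a, ha, hpm⟩ x y hxy
    exact hirr a ha m hpm x y hxy
  · by_contra hne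
    obtain ⟨a, ha, hale⟩ := hatomic _ hne
    obtain ⟨m, hm1, hm2⟩ := hmax a ha
    have hmem : m ∈ {m | ∃ a, IsAtom a ∧ a ⊓ m = ⊥ ∧ ∀ y, a ⊓ y = ⊥ → m ≤ y → y = m} :=
      ⟨a, ha, hm1, hm2⟩
    have : a ≤ m := hale.trans (sInf_le hmem)
    exact ha.1 (le_bot_iff.mp (hm1 ▸ le_inf le_rfl this))
end

section
/- Let B be a complete lattice and A = At(B) its set of atoms. Then B is atomistic (every element is a join of atoms) if and only if the relation I_A = {(a,a) : a ∈ A} is a two-sided neutral element for the multiplication R ⊙ S = (smallest truncated tensor containing R·S) on the truncated tensor product B ⊗̌ B; moreover B ⊗̌ B has a neutral element for ⊙ only if B is atomistic. -/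
/-- A truncated tensor on a complete lattice `B`: a down-set of `B̌ × B̌` (where
`B̌ = B \ {⊥}`) closed under componentwise suprema of nonempty rectangles. -/
def IsTruncTensor {B : Type*} [CompleteLattice B] (T : Set (B × B)) : Prop :=
  (∀ p ∈ T, p.1 ≠ ⊥ ∧ p.2 ≠ ⊥) ∧
  (∀ p q : B × B, p ∈ T → q.1 ≤ p.1 → q.2 ≤ p.2 → q.1 ≠ ⊥ → q.2 ≠ ⊥ → q ∈ T) ∧
  (∀ X Y : Set B, X.Nonempty → Y.Nonempty → X ×ˢ Y ⊆ T → (sSup X, sSup Y) ∈ T)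

/-- The multiplication of the truncated tensor product: the least truncated tensor
containing the relation product `R · S`. -/
def truncTensorMul {B : Type*} [CompleteLattice B] (R S : Set (B × B)) : Set (B × B) :=
  ⋂₀ {T | IsTruncTensor T ∧ {p : B × B | ∃ b, (p.1, b) ∈ R ∧ (b, p.2) ∈ S} ⊆ T}

section Aux

variable {B : Type*} [CompleteLattice B]

/-- Rectangle down-sets are truncated tensors. -/
lemma rect_tt (x y : B) :
    IsTruncTensor {p : B × B | p.1 ≤ x ∧ p.2 ≤ y ∧ p.1 ≠ ⊥ ∧ p.2 ≠ ⊥} := by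
  refine ⟨fun p hp => ⟨hp.2.2.1, hp.2.2.2⟩, ?_, ?_⟩
  · rintro p q ⟨h1, h2, _, _⟩ hq1 hq2 hb1 hb2
    exact ⟨hq1.trans h1, hq2.trans h2, hb1, hb2⟩
  · rintro X Y ⟨x0, hx0⟩ ⟨y0, hy0⟩ hsub
    have h1 : ∀ a ∈ X, a ≤ x := fun a ha => (hsub (Set.mk_mem_prod ha hy0)).1
    have h2 : ∀ b ∈ Y, b ≤ y := fun b hb => (hsub (Set.mk_mem_prod hx0 hb)).2.1
    have hx0b : x0 ≠ ⊥ := (hsub (Set.mk_mem_prod hx0 hy0)).2.2.1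
    have hy0b : y0 ≠ ⊥ := (hsub (Set.mk_mem_prod hx0 hy0)).2.2.2
    refine ⟨sSup_le h1, sSup_le h2, ?_, ?_⟩
    · intro h; exact hx0b (le_bot_iff.mp (h ▸ le_sSup hx0))
    · intro h; exact hy0b (le_bot_iff.mp (h ▸ le_sSup hy0))

lemma subset_mul (R S : Set (B × B)) :
    {p : B × B | ∃ b, (p.1, b) ∈ R ∧ (b, p.2) ∈ S} ⊆ truncTensorMul R S :=
  fun p hp => Set.mem_sInter.mpr fun _ hT => hT.2 hp

lemma mul_subset {R S T : Set (B × B)} (hT : IsTruncTensor T)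
    (h : {p : B × B | ∃ b, (p.1, b) ∈ R ∧ (b, p.2) ∈ S} ⊆ T) :
    truncTensorMul R S ⊆ T :=
  Set.sInter_subset_of_mem ⟨hT, h⟩

/-- `IA` is always a truncated tensor. -/
lemma IA_tt : IsTruncTensor {p : B × B | IsAtom p.1 ∧ p.1 = p.2} := by
  refine ⟨?_, ?_, ?_⟩
  · rintro ⟨a, b⟩ ⟨ha, heq⟩
    simp only at ha heq
    subst heq
    exact ⟨ha.1, ha.1⟩
  · rintro ⟨a, b⟩ ⟨u, v⟩ ⟨ha, heq⟩ hu hv hub hvb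
    simp only at heq hu hv ⊢
    subst heq
    have hu' : u = a := (ha.le_iff.mp hu).resolve_left hub
    have hv' : v = a := (ha.le_iff.mp hv).resolve_left hvb
    subst hu'; subst hv'
    exact ⟨ha, rfl⟩
  · rintro X Y ⟨x0, hx0⟩ ⟨y0, hy0⟩ hsub
    have key : ∀ a ∈ X, ∀ b ∈ Y, IsAtom a ∧ a = b :=
      fun a ha b hb => hsub (Set.mk_mem_prod ha hb)
    have hx : ∀ a ∈ X, a = x0 :=
      fun a ha => ((key a ha y0 hy0).2).trans ((key x0 hx0 y0 hy0).2).symm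
    have hy : ∀ b ∈ Y, b = x0 := fun b hb => ((key x0 hx0 b hb).2).symm
    have hsX : sSup X = x0 :=
      le_antisymm (sSup_le fun a ha => (hx a ha).le) (le_sSup hx0)
    have hsY : sSup Y = x0 :=
      le_antisymm (sSup_le fun b hb => (hy b hb).le) (le_sSup ((hy y0 hy0) ▸ hy0))
    exact ⟨hsX ▸ (key x0 hx0 y0 hy0).1, hsX.trans hsY.symm⟩

/-- Any neutral element of the truncated tensor product forces atomisticity. -/
lemma neutral_atomistic {I : Set (B × B)} (hI : IsTruncTensor I)
    (hn : ∀ T, IsTruncTensor T → truncTensorMul I T = T ∧ truncTensorMul T I = T) :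
    ∀ x : B, x = sSup {a | IsAtom a ∧ a ≤ x} := by
  -- Step 1: I is contained in the diagonal
  have diag : ∀ p ∈ I, p.1 = p.2 := by
    rintro ⟨b, c⟩ hbc
    have hb : b ≠ ⊥ := (hI.1 _ hbc).1
    have hc : c ≠ ⊥ := (hI.1 _ hbc).2
    have h1 : b ≤ c := by
      have hm : (b, c) ∈ truncTensorMul I
          {p : B × B | p.1 ≤ c ∧ p.2 ≤ c ∧ p.1 ≠ ⊥ ∧ p.2 ≠ ⊥} :=
        subset_mul _ _ ⟨c, hbc, ⟨le_rfl, le_rfl, hc, hc⟩⟩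
      rw [(hn _ (rect_tt c c)).1] at hm
      exact hm.1
    have h2 : c ≤ b := by
      have hm : (b, c) ∈ truncTensorMul
          {p : B × B | p.1 ≤ b ∧ p.2 ≤ b ∧ p.1 ≠ ⊥ ∧ p.2 ≠ ⊥} I :=
        subset_mul _ _ ⟨b, ⟨le_rfl, le_rfl, hb, hb⟩, hbc⟩
      rw [(hn _ (rect_tt b b)).2] at hm
      exact hm.2.1
    exact le_antisymm h1 h2
  -- Step 2: elements of I are atoms
  have atoms : ∀ p ∈ I, IsAtom p.1 := by
    rintro ⟨d, d'⟩ hd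
    have hdd : d = d' := diag _ hd
    subst hdd
    have hdb : d ≠ ⊥ := (hI.1 _ hd).1
    refine ⟨hdb, fun c hc => ?_⟩
    by_contra hcb
    have : (c, d) ∈ I := hI.2.1 (d, d) (c, d) hd hc.le le_rfl hcb hdb
    exact absurd (diag _ this) hc.ne
  -- Step 3: join density
  intro x
  refine le_antisymm ?_ (sSup_le fun a ha => ha.2)
  rcases eq_or_ne x ⊥ with rfl | hx
  · exact bot_le
  · set s := sSup {a | IsAtom a ∧ a ≤ x} with hs
    have hTx := rect_tt x x
    have hmx : (x, x) ∈ ({p : B × B | p.1 ≤ x ∧ p.2 ≤ x ∧ p.1 ≠ ⊥ ∧ p.2 ≠ ⊥}) :=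
      ⟨le_rfl, le_rfl, hx, hx⟩
    rw [← (hn _ hTx).1] at hmx
    have hsub : truncTensorMul I {p : B × B | p.1 ≤ x ∧ p.2 ≤ x ∧ p.1 ≠ ⊥ ∧ p.2 ≠ ⊥} ⊆
        {p : B × B | p.1 ≤ s ∧ p.2 ≤ x ∧ p.1 ≠ ⊥ ∧ p.2 ≠ ⊥} := by
      refine mul_subset (rect_tt s x) ?_
      rintro ⟨u, w⟩ ⟨m, hum, hmw⟩
      have hud : u = m := diag _ hum
      have hua : IsAtom u := atoms _ hum
      have hux : u ≤ x := hud ▸ hmw.1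
      exact ⟨le_sSup ⟨hua, hux⟩, hmw.2.1, hua.1, hmw.2.2.2⟩
    exact (hsub hmx).1

/-- Atomisticity makes `IA` neutral. -/
lemma atomistic_neutral (hat : ∀ x : B, x = sSup {a | IsAtom a ∧ a ≤ x})
    (T : Set (B × B)) (hT : IsTruncTensor T) :
    truncTensorMul {p : B × B | IsAtom p.1 ∧ p.1 = p.2} T = T ∧
    truncTensorMul T {p : B × B | IsAtom p.1 ∧ p.1 = p.2} = T := by
  have hXne : ∀ x : B, x ≠ ⊥ → ({a | IsAtom a ∧ a ≤ x} : Set B).Nonempty := by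
    intro x hx
    by_contra h
    rw [Set.not_nonempty_iff_eq_empty] at h
    exact hx (by rw [hat x, h, sSup_empty])
  constructor
  · refine le_antisymm (mul_subset hT ?_) ?_
    · rintro ⟨u, w⟩ ⟨m, ⟨hua, hum⟩, hmw⟩
      simp only at hum
      exact hum ▸ hmw
    · rintro ⟨x, y⟩ hxy
      refine Set.mem_sInter.mpr ?_
      rintro T' ⟨hT', hsub⟩
      have hxb : x ≠ ⊥ := (hT.1 _ hxy).1
      have hyb : y ≠ ⊥ := (hT.1 _ hxy).2
      have hrect : ({a | IsAtom a ∧ a ≤ x} : Set B) ×ˢ ({y} : Set B) ⊆ T' := by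
        rintro ⟨a, y'⟩ ⟨⟨ha, hax⟩, hy'⟩
        rw [show y' = y from hy']
        exact hsub ⟨a, ⟨ha, rfl⟩, hT.2.1 (x, y) (a, y) hxy hax le_rfl ha.1 hyb⟩
      have := hT'.2.2 _ _ (hXne x hxb) (Set.singleton_nonempty y) hrect
      rwa [← hat x, sSup_singleton] at this
  · refine le_antisymm (mul_subset hT ?_) ?_
    · rintro ⟨u, w⟩ ⟨m, hum, ⟨hma, hmw⟩⟩
      simp only at hmw
      exact hmw ▸ hum
    · rintro ⟨x, y⟩ hxy
      refine Set.mem_sInter.mpr ?_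
      rintro T' ⟨hT', hsub⟩
      have hxb : x ≠ ⊥ := (hT.1 _ hxy).1
      have hyb : y ≠ ⊥ := (hT.1 _ hxy).2
      have hrect : ({x} : Set B) ×ˢ ({a | IsAtom a ∧ a ≤ y} : Set B) ⊆ T' := by
        rintro ⟨x', a⟩ ⟨hx', ⟨ha, hay⟩⟩
        rw [show x' = x from hx']
        exact hsub ⟨a, hT.2.1 (x, y) (x, a) hxy le_rfl hay hxb ha.1, ⟨ha, rfl⟩⟩
      have := hT'.2.2 _ _ (Set.singleton_nonempty x) (hXne y hyb) hrect
      rwa [← hat y, sSup_singleton] at this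

end Aux

theorem stmt_18 {B : Type*} [CompleteLattice B] :
    let IA : Set (B × B) := {p | IsAtom p.1 ∧ p.1 = p.2}
    ((∀ x : B, x = sSup {a | IsAtom a ∧ a ≤ x}) ↔
      (IsTruncTensor IA ∧
        ∀ T, IsTruncTensor T → truncTensorMul IA T = T ∧ truncTensorMul T IA = T)) ∧
    ((∃ I : Set (B × B), IsTruncTensor I ∧
        ∀ T, IsTruncTensor T → truncTensorMul I T = T ∧ truncTensorMul T I = T) →
      ∀ x : B, x = sSup {a | IsAtom a ∧ a ≤ x}) := by
  intro IA
  constructor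
  · constructor
    · intro hat
      exact ⟨IA_tt, fun T hT => atomistic_neutral hat T hT⟩
    · rintro ⟨hIA, hn⟩
      exact neutral_atomistic hIA hn
  · rintro ⟨I, hI, hn⟩
    exact neutral_atomistic hI hn
end

section
/- For a complete lattice B, the following are equivalent: (a) B is atomic and boolean (isomorphic to a power set lattice); (b) B is atomistic and pseudocomplemented. In particular, if B is atomistic and pseudocomplemented then b ∨ b* = 1 for all b ∈ B and B is distributive. -/
section Aux
variable {B : Type*} [CompleteLattice B]

private lemma aux19_le_of_atoms (hA : ∀ x : B, x = sSup {a | IsAtom a ∧ a ≤ x})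
    {x y : B} (h : ∀ a : B, IsAtom a → a ≤ x → a ≤ y) : x ≤ y := by
  conv_lhs => rw [hA x]
  exact sSup_le fun a ⟨ha, hax⟩ => h a ha hax

private lemma aux19_atom_le_or_bot {a y : B} (ha : IsAtom a) : a ≤ y ∨ a ⊓ y = ⊥ := by
  rcases (ha.le_iff.mp (inf_le_left : a ⊓ y ≤ a)) with h | h
  · exact Or.inr h
  · exact Or.inl (h ▸ inf_le_right)

private lemma aux19_atom_le_or (hP : ∀ b : B, ∃ p, b ⊓ p = ⊥ ∧ ∀ z, b ⊓ z = ⊥ → z ≤ p)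
    {a y z : B} (ha : IsAtom a) (h : a ≤ y ⊔ z) : a ≤ y ∨ a ≤ z := by
  by_contra hc
  push_neg at hc
  obtain ⟨hy, hz⟩ := hc
  obtain ⟨p, hp0, hpmax⟩ := hP a
  have hay : a ⊓ y = ⊥ := (aux19_atom_le_or_bot ha).resolve_left hy
  have haz : a ⊓ z = ⊥ := (aux19_atom_le_or_bot ha).resolve_left hz
  have hyp : y ≤ p := hpmax y hay
  have hzp : z ≤ p := hpmax z haz
  have hap : a ≤ p := h.trans (sup_le hyp hzp)
  have : a = ⊥ := by
    have := inf_eq_left.mpr hap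
    rw [this] at hp0; exact hp0
  exact ha.1 this

private lemma aux19_distrib (hA : ∀ x : B, x = sSup {a | IsAtom a ∧ a ≤ x})
    (hP : ∀ b : B, ∃ p, b ⊓ p = ⊥ ∧ ∀ z, b ⊓ z = ⊥ → z ≤ p) :
    ∀ x y z : B, x ⊓ (y ⊔ z) = x ⊓ y ⊔ x ⊓ z := by
  intro x y z
  refine le_antisymm ?_ (sup_le (inf_le_inf_left x le_sup_left) (inf_le_inf_left x le_sup_right))
  apply aux19_le_of_atoms hA
  intro a ha hax
  rcases aux19_atom_le_or hP ha (hax.trans inf_le_right) with h | h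
  · exact le_sup_left.trans' (le_inf (hax.trans inf_le_left) h)
  · exact le_sup_right.trans' (le_inf (hax.trans inf_le_left) h)

private lemma aux19_sup_top (hA : ∀ x : B, x = sSup {a | IsAtom a ∧ a ≤ x})
    {b p : B} (hpmax : ∀ z, b ⊓ z = ⊥ → z ≤ p) : b ⊔ p = ⊤ := by
  refine le_antisymm le_top (aux19_le_of_atoms hA fun a ha _ => ?_)
  rcases aux19_atom_le_or_bot (y := b) ha with h | h
  · exact h.trans le_sup_left
  · exact (hpmax a (by rwa [inf_comm])).trans le_sup_right

end Aux

/-- A complete lattice `B` is atomic and boolean (distributive and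
complemented) iff it is atomistic and pseudocomplemented. In particular, if `B` is
atomistic and pseudocomplemented then `b ⊔ b* = ⊤` for every `b` (where `b*` is the
pseudocomplement of `b`) and `B` is distributive. -/
theorem stmt_19 {B : Type*} [CompleteLattice B] :
    ((IsAtomic B ∧ ComplementedLattice B ∧
        ∀ x y z : B, x ⊓ (y ⊔ z) = x ⊓ y ⊔ x ⊓ z) ↔
      ((∀ x : B, x = sSup {a | IsAtom a ∧ a ≤ x}) ∧
        ∀ b : B, ∃ p, b ⊓ p = ⊥ ∧ ∀ z, b ⊓ z = ⊥ → z ≤ p)) ∧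
    (((∀ x : B, x = sSup {a | IsAtom a ∧ a ≤ x}) ∧
        ∀ b : B, ∃ p, b ⊓ p = ⊥ ∧ ∀ z, b ⊓ z = ⊥ → z ≤ p) →
      ((∀ b p : B, (b ⊓ p = ⊥ ∧ ∀ z, b ⊓ z = ⊥ → z ≤ p) → b ⊔ p = ⊤) ∧
        ∀ x y z : B, x ⊓ (y ⊔ z) = x ⊓ y ⊔ x ⊓ z)) := by
  constructor
  · constructor
    · rintro ⟨hAt, hC, hD⟩
      constructor
      · intro x
        set s := sSup {a : B | IsAtom a ∧ a ≤ x} with hs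
        have hsx : s ≤ x := sSup_le fun a ha => ha.2
        obtain ⟨c, hc⟩ := (hC.exists_isCompl s)
        have hxc : x ⊓ c = ⊥ := by
          by_contra h
          rcases (hAt.eq_bot_or_exists_atom_le (x ⊓ c)).resolve_left h with ⟨a, ha, hax⟩
          have has : a ≤ s := le_sSup ⟨ha, hax.trans inf_le_left⟩
          have : a ≤ s ⊓ c := le_inf has (hax.trans inf_le_right)
          rw [hc.inf_eq_bot] at this
          exact ha.1 (le_bot_iff.mp this)
        have : x = x ⊓ (s ⊔ c) := by rw [hc.sup_eq_top, inf_top_eq]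
        rw [this, hD, hxc, sup_bot_eq, inf_eq_right.mpr hsx]
      · intro b
        obtain ⟨c, hc⟩ := hC.exists_isCompl b
        refine ⟨c, hc.inf_eq_bot, fun z hz => ?_⟩
        have : z = z ⊓ (b ⊔ c) := by rw [hc.sup_eq_top, inf_top_eq]
        rw [this, hD, inf_comm z b, hz, bot_sup_eq]
        exact inf_le_right
    · rintro ⟨hA, hP⟩
      refine ⟨⟨fun x => ?_⟩, ⟨fun b => ?_⟩, aux19_distrib hA hP⟩
      · by_cases hx : x = ⊥
        · exact Or.inl hx
        · refine Or.inr ?_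
          by_contra h
          push_neg at h
          have hse : {a : B | IsAtom a ∧ a ≤ x} = ∅ := by
            ext a; simp only [Set.mem_setOf_eq, Set.mem_empty_iff_false, iff_false]
            rintro ⟨ha, hax⟩; exact h a ha hax
          have hx' := hA x
          rw [hse, sSup_empty] at hx'
          exact hx hx'
      · obtain ⟨p, hp0, hpmax⟩ := hP b
        exact ⟨p, IsCompl.of_eq hp0 (aux19_sup_top hA hpmax)⟩
  · rintro ⟨hA, hP⟩
    exact ⟨fun b p ⟨_, hpmax⟩ => aux19_sup_top hA hpmax, aux19_distrib hA hP⟩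
end
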